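/- arXiv:1711.07501 — 3 statements merged into one kernel-verified Lean document; each statement's English description precedes it below -/
import Mathlib

section
/- For every n ≥ 2 and every β = (μ_{l,r}) ∈ A_{n+1}, the number C_β equals the sum over pairs (l̂, r̂) with l̂ + r̂ ≥ 2 and μ_{l̂,r̂} ≥ 1 of: (μ_{l̂−1,r̂} + 1)·C_{β_−^{l̂,r̂}} when l̂ ≥ 1 and l̂ + r̂ ≥ 3, plus (l̂ + 1)·(μ_{l̂+1,r̂−1} + 1)·C_{β_b^{l̂,r̂}} when μ_{2,0} ≥ 1, r̂ ≥ 1, and (l̂, r̂) ≠ (1, 1); plus, when μ_{1,1} ≥ 1, the two additional terms 2·μ_{2,0}·C_{β_d} and (Σ_{l+r≥2} r·μ_{l,r})·C_{β_d}. -/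
/-- Membership in the set `A_n`: finitely supported families `(m_{l,r})` of nonnegative
integers indexed by pairs `(l, r)` with `l + r ≥ 2`, with `Σ l·m_{l,r} = n` and
`Σ r·m_{l,r} = Σ m_{l,r} − 1`. -/
def Amem (n : ℕ) (m : (ℕ × ℕ) →₀ ℕ) : Prop :=
  (∀ p ∈ m.support, 2 ≤ p.1 + p.2) ∧
  (m.sum fun p k => p.1 * k) = n ∧
  (m.sum fun p k => p.2 * k) + 1 = m.sum fun _ k => k

/-- Membership in the set `Ã_n`: finitely supported families `(m_{l,r})` indexed by all
pairs `(l, r)` with `m_{0,0} = m_{1,0} = 0`, `Σ m_{l,r} = n − 1`, `Σ l·m_{l,r} = n`,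
and `Σ r·m_{l,r} = n − 2`. -/
def AtildeMem (n : ℕ) (m : (ℕ × ℕ) →₀ ℕ) : Prop :=
  m (0, 0) = 0 ∧ m (1, 0) = 0 ∧
  (m.sum fun _ k => k) + 1 = n ∧
  (m.sum fun p k => p.1 * k) = n ∧
  (m.sum fun p k => p.2 * k) + 2 = n

/-- `β_−^{l̂,r̂}`: decrease `μ_{l̂,r̂}` by 1, increase `μ_{l̂−1,r̂}` by 1. -/
noncomputable def minusOp (μ : (ℕ × ℕ) →₀ ℕ) (l r : ℕ) : (ℕ × ℕ) →₀ ℕ :=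
  μ + Finsupp.single (l - 1, r) 1 - Finsupp.single (l, r) 1

/-- `β_b^{l̂,r̂}`: decrease `μ_{l̂,r̂}` and `μ_{2,0}` by 1, increase `μ_{l̂+1,r̂−1}` by 1. -/
noncomputable def bOp (μ : (ℕ × ℕ) →₀ ℕ) (l r : ℕ) : (ℕ × ℕ) →₀ ℕ :=
  μ + Finsupp.single (l + 1, r - 1) 1 - Finsupp.single (l, r) 1 - Finsupp.single (2, 0) 1

/-- `β_d`: decrease `μ_{1,1}` by 1. -/
noncomputable def dOp (μ : (ℕ × ℕ) →₀ ℕ) : (ℕ × ℕ) →₀ ℕ :=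
  μ - Finsupp.single (1, 1) 1

/-- The combinatorial coefficient
`C_α = (Σ l·m_{l,r})! (Σ r·m_{l,r})! / ∏ (l!^{m_{l,r}} r!^{m_{l,r}} m_{l,r}!)`. -/
noncomputable def Ccoef (m : (ℕ × ℕ) →₀ ℕ) : ℝ :=
  ((m.sum fun p k => p.1 * k).factorial : ℝ) * ((m.sum fun p k => p.2 * k).factorial : ℝ) /
    (m.prod fun p k =>
      (p.1.factorial : ℝ) ^ k * (p.2.factorial : ℝ) ^ k * (k.factorial : ℝ))

open Finsupp Finset

noncomputable def gfun : ℕ × ℕ → ℕ → ℝ := fun p k =>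
  ((p.1.factorial : ℝ)) ^ k * ((p.2.factorial : ℝ)) ^ k * (k.factorial : ℝ)

lemma gfun_zero (p : ℕ × ℕ) : gfun p 0 = 1 := by simp [gfun]

lemma gfun_pos (p : ℕ × ℕ) (k : ℕ) : 0 < gfun p k := by
  unfold gfun
  positivity

lemma gfun_succ (p : ℕ × ℕ) (k : ℕ) :
    gfun p (k + 1) = ((p.1.factorial : ℝ) * (p.2.factorial : ℝ) * ((k : ℝ) + 1)) * gfun p k := by
  unfold gfun
  push_cast [Nat.factorial_succ, pow_succ]
  ring

noncomputable def Dp (m : (ℕ × ℕ) →₀ ℕ) : ℝ := m.prod gfun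

lemma Dp_pos (m : (ℕ × ℕ) →₀ ℕ) : 0 < Dp m :=
  Finset.prod_pos fun p _ => gfun_pos p (m p)

lemma Ccoef_eq (m : (ℕ × ℕ) →₀ ℕ) :
    Ccoef m = ((m.sum fun p k => p.1 * k).factorial : ℝ)
      * ((m.sum fun p k => p.2 * k).factorial : ℝ) / Dp m := rfl

lemma Dp_add_single (m : (ℕ × ℕ) →₀ ℕ) (a : ℕ × ℕ) :
    Dp (m + Finsupp.single a 1)
      = ((a.1.factorial : ℝ) * (a.2.factorial : ℝ) * ((m a : ℝ) + 1)) * Dp m := by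
  classical
  set f : (ℕ × ℕ) →₀ ℕ := m + Finsupp.single a 1 with hf
  have hsub : f.support ⊆ insert a m.support := by
    intro p hp
    rcases Finset.mem_union.mp (Finsupp.support_add hp) with h | h
    · exact Finset.mem_insert_of_mem h
    · have := Finsupp.support_single_subset h
      simp only [Finset.mem_singleton] at this
      simp [this]
  have h1 : Dp f = ∏ p ∈ insert a m.support, gfun p (f p) :=
    Finsupp.prod_of_support_subset _ hsub _ (fun p _ => gfun_zero p)
  have h2 : Dp m = ∏ p ∈ insert a m.support, gfun p (m p) :=
    Finsupp.prod_of_support_subset _ (Finset.subset_insert a _) _ (fun p _ => gfun_zero p)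
  have ha : a ∈ insert a m.support := Finset.mem_insert_self a _
  rw [h1, h2, ← Finset.mul_prod_erase _ _ ha, ← Finset.mul_prod_erase _ _ ha]
  have hrest : ∏ p ∈ (insert a m.support).erase a, gfun p (f p)
      = ∏ p ∈ (insert a m.support).erase a, gfun p (m p) := by
    refine Finset.prod_congr rfl fun p hp => ?_
    have hpa : p ≠ a := Finset.ne_of_mem_erase hp
    simp [hf, Finsupp.add_apply, Finsupp.single_apply, Ne.symm hpa]
  rw [hrest]
  have hfa : f a = m a + 1 := by simp [hf]
  rw [hfa, gfun_succ]
  ring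

lemma SL_add_single (m : (ℕ × ℕ) →₀ ℕ) (a : ℕ × ℕ) :
    ((m + Finsupp.single a 1).sum fun p k => p.1 * k)
      = (m.sum fun p k => p.1 * k) + a.1 := by
  rw [Finsupp.sum_add_index' (fun p => by simp) (fun p b1 b2 => mul_add _ _ _)]
  simp [Finsupp.sum_single_index]

lemma SR_add_single (m : (ℕ × ℕ) →₀ ℕ) (a : ℕ × ℕ) :
    ((m + Finsupp.single a 1).sum fun p k => p.2 * k)
      = (m.sum fun p k => p.2 * k) + a.2 := by
  rw [Finsupp.sum_add_index' (fun p => by simp) (fun p b1 b2 => mul_add _ _ _)]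
  simp [Finsupp.sum_single_index]

lemma S0_add_single (m : (ℕ × ℕ) →₀ ℕ) (a : ℕ × ℕ) :
    ((m + Finsupp.single a 1).sum fun _ k => k) = (m.sum fun _ k => k) + 1 := by
  rw [Finsupp.sum_add_index' (fun p => rfl) (fun p b1 b2 => rfl)]
  simp [Finsupp.sum_single_index]

lemma sub_add_single (m : (ℕ × ℕ) →₀ ℕ) (a : ℕ × ℕ) (h : 1 ≤ m a) :
    m - Finsupp.single a 1 + Finsupp.single a 1 = m :=
  tsub_add_cancel_of_le (Finsupp.single_le_iff.mpr h)

lemma cancel_aux {c x y : ℝ} (hc : 0 < c) (h : c * x = c * y) : x = y :=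
  mul_left_cancel₀ (ne_of_gt hc) h

lemma P1 (μ : (ℕ × ℕ) →₀ ℕ) (l r : ℕ) (hl : 1 ≤ l) (hlr : 3 ≤ l + r)
    (hb : 1 ≤ μ (l, r)) :
    ((μ (l - 1, r) : ℝ) + 1) * Ccoef (minusOp μ l r) * (((μ.sum fun p k => p.1 * k) : ℕ) : ℝ)
      = ((l : ℝ) * (μ (l, r) : ℝ)) * Ccoef μ := by
  classical
  set a : ℕ × ℕ := (l - 1, r) with ha
  set b : ℕ × ℕ := (l, r) with hbdef
  have hab : a ≠ b := by
    intro h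
    rw [ha, hbdef, Prod.mk.injEq] at h
    omega
  set f1 : (ℕ × ℕ) →₀ ℕ := μ + Finsupp.single a 1 with hf1
  have hf1b : f1 b = μ b := by
    simp [hf1, Finsupp.single_apply, hab]
  have hmop : minusOp μ l r = f1 - Finsupp.single b 1 := rfl
  have hdec : minusOp μ l r + Finsupp.single b 1 = f1 := by
    rw [hmop]; exact sub_add_single f1 b (hf1b ▸ hb)
  have hmb : (minusOp μ l r) b + 1 = μ b := by
    rw [hmop, Finsupp.tsub_apply, hf1b, Finsupp.single_eq_same]
    exact Nat.succ_pred_eq_of_pos hb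
  have hSL1 : (f1.sum fun p k => p.1 * k) = (μ.sum fun p k => p.1 * k) + (l - 1) :=
    SL_add_single μ a
  have hSL2 : (f1.sum fun p k => p.1 * k)
      = ((minusOp μ l r).sum fun p k => p.1 * k) + l := by
    rw [← hdec, SL_add_single]
  have hSL : (μ.sum fun p k => p.1 * k)
      = ((minusOp μ l r).sum fun p k => p.1 * k) + 1 := by
    have h12 := hSL1.symm.trans hSL2
    generalize (μ.sum fun p k => p.1 * k) = A at h12 ⊢
    generalize ((minusOp μ l r).sum fun p k => p.1 * k) = B at h12 ⊢
    omega
  have hSR1 : (f1.sum fun p k => p.2 * k) = (μ.sum fun p k => p.2 * k) + r :=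
    SR_add_single μ a
  have hSR2 : (f1.sum fun p k => p.2 * k)
      = ((minusOp μ l r).sum fun p k => p.2 * k) + r := by
    rw [← hdec, SR_add_single]
  have hSR : ((minusOp μ l r).sum fun p k => p.2 * k) = (μ.sum fun p k => p.2 * k) := by
    have h12 := hSR1.symm.trans hSR2
    generalize (μ.sum fun p k => p.2 * k) = A at h12 ⊢
    generalize ((minusOp μ l r).sum fun p k => p.2 * k) = B at h12 ⊢
    omega
  have hD1 : Dp f1 = (((l - 1).factorial : ℝ) * (r.factorial : ℝ) * ((μ a : ℝ) + 1)) * Dp μ :=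
    Dp_add_single μ a
  have hD2 : Dp f1 = ((l.factorial : ℝ) * (r.factorial : ℝ)
      * (((minusOp μ l r) b : ℝ) + 1)) * Dp (minusOp μ l r) := by
    rw [← hdec]; exact Dp_add_single _ b
  have hmbR : (((minusOp μ l r) b : ℝ) + 1) = (μ b : ℝ) := by
    exact_mod_cast congrArg (Nat.cast : ℕ → ℝ) hmb
  have hfact : (l.factorial : ℝ) = (l : ℝ) * ((l - 1).factorial : ℝ) := by
    rcases Nat.exists_eq_add_of_le hl with ⟨k, hk⟩
    subst hk
    push_cast [Nat.add_sub_cancel_left, add_comm 1 k, Nat.factorial_succ]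
    ring
  have key : ((μ a : ℝ) + 1) * Dp μ = (l : ℝ) * (μ b : ℝ) * Dp (minusOp μ l r) := by
    have h := hD1.symm.trans hD2
    rw [hmbR, hfact] at h
    refine cancel_aux (c := ((l - 1).factorial : ℝ) * (r.factorial : ℝ)) (by positivity) ?_
    linear_combination h
  rw [Ccoef_eq, Ccoef_eq, hSL, hSR]
  set X := ((minusOp μ l r).sum fun p k => p.1 * k) with hX
  set Y := (μ.sum fun p k => p.2 * k) with hY
  have hfac2 : (((X + 1).factorial : ℝ)) = ((X : ℝ) + 1) * (X.factorial : ℝ) := by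
    rw [Nat.factorial_succ]
    push_cast
    ring
  rw [hfac2]
  have d1 : Dp (minusOp μ l r) ≠ 0 := ne_of_gt (Dp_pos _)
  have d2 : Dp μ ≠ 0 := ne_of_gt (Dp_pos _)
  simp only [Nat.cast_add, Nat.cast_one]
  field_simp
  linear_combination key

lemma P2 (μ : (ℕ × ℕ) →₀ ℕ) (l r : ℕ) (h20 : 1 ≤ μ (2, 0)) (hr : 1 ≤ r)
    (hne : (l, r) ≠ ((1 : ℕ), (1 : ℕ))) (hb : 1 ≤ μ (l, r)) :
    ((l : ℝ) + 1) * ((μ (l + 1, r - 1) : ℝ) + 1) * Ccoef (bOp μ l r)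
        * ((((μ.sum fun p k => p.1 * k) : ℕ) : ℝ) * (((μ.sum fun p k => p.2 * k) : ℕ) : ℝ))
      = 2 * (μ (2, 0) : ℝ) * (r : ℝ) * (μ (l, r) : ℝ) * Ccoef μ := by
  classical
  set a : ℕ × ℕ := (l + 1, r - 1) with ha
  set b : ℕ × ℕ := (l, r) with hbdef
  set c : ℕ × ℕ := ((2 : ℕ), (0 : ℕ)) with hc
  have hab : a ≠ b := by
    intro h
    rw [ha, hbdef, Prod.mk.injEq] at h
    omega
  have hac : a ≠ c := by
    intro h
    rw [ha, hc, Prod.mk.injEq] at h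
    exact hne (by rw [hbdef] at *; exact Prod.ext (by omega) (by omega))
  have hbc : b ≠ c := by
    intro h
    rw [hbdef, hc, Prod.mk.injEq] at h
    omega
  set f1 : (ℕ × ℕ) →₀ ℕ := μ + Finsupp.single a 1 with hf1
  have hf1b : f1 b = μ b := by
    simp [hf1, Finsupp.single_apply, hab]
  have hf1c : f1 c = μ c := by
    simp [hf1, Finsupp.single_apply, hac]
  set f2 : (ℕ × ℕ) →₀ ℕ := f1 - Finsupp.single b 1 with hf2
  have hdec1 : f2 + Finsupp.single b 1 = f1 :=
    sub_add_single f1 b (hf1b ▸ hb)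
  have hf2b : f2 b + 1 = μ b := by
    rw [hf2, Finsupp.tsub_apply, hf1b, Finsupp.single_eq_same]
    exact Nat.succ_pred_eq_of_pos hb
  have hf2c : f2 c = μ c := by
    rw [hf2, Finsupp.tsub_apply, hf1c]
    simp [Finsupp.single_apply, hbc]
  have hbop : bOp μ l r = f2 - Finsupp.single c 1 := rfl
  have hdec2 : bOp μ l r + Finsupp.single c 1 = f2 := by
    rw [hbop]; exact sub_add_single f2 c (hf2c ▸ h20)
  have hbopc : (bOp μ l r) c + 1 = μ c := by
    rw [hbop, Finsupp.tsub_apply, hf2c, Finsupp.single_eq_same]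
    exact Nat.succ_pred_eq_of_pos h20
  -- SL relations
  have hSL1 : (f1.sum fun p k => p.1 * k) = (μ.sum fun p k => p.1 * k) + (l + 1) :=
    SL_add_single μ a
  have hSL2 : (f1.sum fun p k => p.1 * k) = (f2.sum fun p k => p.1 * k) + l := by
    rw [← hdec1, SL_add_single]
  have hSL3 : (f2.sum fun p k => p.1 * k) = ((bOp μ l r).sum fun p k => p.1 * k) + 2 := by
    rw [← hdec2, SL_add_single]
  have hSL : (μ.sum fun p k => p.1 * k) = ((bOp μ l r).sum fun p k => p.1 * k) + 1 := by
    have h12 := hSL1.symm.trans hSL2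
    rw [hSL3] at h12
    generalize (μ.sum fun p k => p.1 * k) = A at h12 ⊢
    generalize ((bOp μ l r).sum fun p k => p.1 * k) = B at h12 ⊢
    omega
  -- SR relations
  have hSR1 : (f1.sum fun p k => p.2 * k) = (μ.sum fun p k => p.2 * k) + (r - 1) :=
    SR_add_single μ a
  have hSR2 : (f1.sum fun p k => p.2 * k) = (f2.sum fun p k => p.2 * k) + r := by
    rw [← hdec1, SR_add_single]
  have hSR3 : (f2.sum fun p k => p.2 * k) = ((bOp μ l r).sum fun p k => p.2 * k) + 0 := by
    rw [← hdec2, SR_add_single]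
  have hSR : (μ.sum fun p k => p.2 * k) = ((bOp μ l r).sum fun p k => p.2 * k) + 1 := by
    have h12 := hSR1.symm.trans hSR2
    rw [hSR3] at h12
    generalize (μ.sum fun p k => p.2 * k) = A at h12 ⊢
    generalize ((bOp μ l r).sum fun p k => p.2 * k) = B at h12 ⊢
    omega
  -- Dp relations
  have hD1 : Dp f1 = (((l + 1).factorial : ℝ) * ((r - 1).factorial : ℝ) * ((μ a : ℝ) + 1)) * Dp μ :=
    Dp_add_single μ a
  have hD2 : Dp f1 = ((l.factorial : ℝ) * (r.factorial : ℝ) * ((f2 b : ℝ) + 1)) * Dp f2 := by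
    rw [← hdec1]; exact Dp_add_single f2 b
  have hD3 : Dp f2 = (((2 : ℕ).factorial : ℝ) * ((0 : ℕ).factorial : ℝ)
      * (((bOp μ l r) c : ℝ) + 1)) * Dp (bOp μ l r) := by
    rw [← hdec2]; exact Dp_add_single _ c
  have hf2bR : ((f2 b : ℝ) + 1) = (μ b : ℝ) := by
    exact_mod_cast congrArg (Nat.cast : ℕ → ℝ) hf2b
  have hbopcR : (((bOp μ l r) c : ℝ) + 1) = (μ c : ℝ) := by
    exact_mod_cast congrArg (Nat.cast : ℕ → ℝ) hbopc
  have hfactl : ((l + 1).factorial : ℝ) = ((l : ℝ) + 1) * (l.factorial : ℝ) := by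
    push_cast [Nat.factorial_succ]; ring
  have hfactr : (r.factorial : ℝ) = (r : ℝ) * ((r - 1).factorial : ℝ) := by
    rcases Nat.exists_eq_add_of_le hr with ⟨k, hk⟩
    subst hk
    push_cast [Nat.add_sub_cancel_left, add_comm 1 k, Nat.factorial_succ]
    ring
  have key : ((l : ℝ) + 1) * ((μ a : ℝ) + 1) * Dp μ
      = 2 * (μ c : ℝ) * (r : ℝ) * (μ b : ℝ) * Dp (bOp μ l r) := by
    have h := hD1.symm.trans hD2
    rw [hD3, hf2bR, hfactl, hfactr] at h
    refine cancel_aux (c := (l.factorial : ℝ) * ((r - 1).factorial : ℝ)) (by positivity) ?_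
    rw [hbopcR] at h
    norm_num [Nat.factorial] at h
    linear_combination h
  rw [Ccoef_eq, Ccoef_eq, hSL, hSR]
  set X := ((bOp μ l r).sum fun p k => p.1 * k) with hX
  set Y := ((bOp μ l r).sum fun p k => p.2 * k) with hY
  have hfac2 : (((X + 1).factorial : ℝ)) = ((X : ℝ) + 1) * (X.factorial : ℝ) := by
    rw [Nat.factorial_succ]; push_cast; ring
  have hfac3 : (((Y + 1).factorial : ℝ)) = ((Y : ℝ) + 1) * (Y.factorial : ℝ) := by
    rw [Nat.factorial_succ]; push_cast; ring
  rw [hfac2, hfac3]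
  have d1 : Dp (bOp μ l r) ≠ 0 := ne_of_gt (Dp_pos _)
  have d2 : Dp μ ≠ 0 := ne_of_gt (Dp_pos _)
  simp only [Nat.cast_add, Nat.cast_one]
  field_simp
  linear_combination key

lemma P3 (μ : (ℕ × ℕ) →₀ ℕ) (hb : 1 ≤ μ (1, 1)) :
    Ccoef (dOp μ)
        * ((((μ.sum fun p k => p.1 * k) : ℕ) : ℝ) * (((μ.sum fun p k => p.2 * k) : ℕ) : ℝ))
      = (μ (1, 1) : ℝ) * Ccoef μ := by
  classical
  set b : ℕ × ℕ := ((1 : ℕ), (1 : ℕ)) with hbdef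
  have hdop : dOp μ = μ - Finsupp.single b 1 := rfl
  have hdec : dOp μ + Finsupp.single b 1 = μ := by
    rw [hdop]; exact sub_add_single μ b hb
  have hdb : (dOp μ) b + 1 = μ b := by
    rw [hdop, Finsupp.tsub_apply, Finsupp.single_eq_same]
    exact Nat.succ_pred_eq_of_pos hb
  have hSL : (μ.sum fun p k => p.1 * k) = ((dOp μ).sum fun p k => p.1 * k) + 1 := by
    conv_lhs => rw [← hdec]
    rw [SL_add_single]
  have hSR : (μ.sum fun p k => p.2 * k) = ((dOp μ).sum fun p k => p.2 * k) + 1 := by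
    conv_lhs => rw [← hdec]
    rw [SR_add_single]
  have hD : Dp μ = (((1 : ℕ).factorial : ℝ) * ((1 : ℕ).factorial : ℝ)
      * (((dOp μ) b : ℝ) + 1)) * Dp (dOp μ) := by
    conv_lhs => rw [← hdec]
    exact Dp_add_single _ b
  have hdbR : (((dOp μ) b : ℝ) + 1) = (μ b : ℝ) := by
    exact_mod_cast congrArg (Nat.cast : ℕ → ℝ) hdb
  have key : Dp μ = (μ b : ℝ) * Dp (dOp μ) := by
    rw [hD, hdbR]
    norm_num [Nat.factorial]
  rw [Ccoef_eq, Ccoef_eq, hSL, hSR]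
  set X := ((dOp μ).sum fun p k => p.1 * k) with hX
  set Y := ((dOp μ).sum fun p k => p.2 * k) with hY
  have hfac2 : (((X + 1).factorial : ℝ)) = ((X : ℝ) + 1) * (X.factorial : ℝ) := by
    rw [Nat.factorial_succ]; push_cast; ring
  have hfac3 : (((Y + 1).factorial : ℝ)) = ((Y : ℝ) + 1) * (Y.factorial : ℝ) := by
    rw [Nat.factorial_succ]; push_cast; ring
  rw [hfac2, hfac3]
  have d1 : Dp (dOp μ) ≠ 0 := ne_of_gt (Dp_pos _)
  have d2 : Dp μ ≠ 0 := ne_of_gt (Dp_pos _)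
  simp only [Nat.cast_add, Nat.cast_one]
  field_simp
  linear_combination key

lemma split_sum {S : Finset (ℕ × ℕ)} (c : ℕ × ℕ → Prop) [DecidablePred c] (t : ℕ × ℕ → ℕ) :
    ∑ p ∈ S, t p = (∑ p ∈ S, if c p then t p else 0) + ∑ p ∈ S, if ¬ c p then t p else 0 := by
  rw [← Finset.sum_add_distrib]
  refine Finset.sum_congr rfl fun p _ => ?_
  by_cases h : c p <;> simp [h]

lemma N1 (μ : (ℕ × ℕ) →₀ ℕ) (hsupp : ∀ p ∈ μ.support, 2 ≤ p.1 + p.2) :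
    (∑ p ∈ μ.support, if 1 ≤ p.1 ∧ 3 ≤ p.1 + p.2 then p.1 * μ p else 0)
      + (2 * μ (2, 0) + μ (1, 1)) = μ.sum fun p k => p.1 * k := by
  classical
  have hstep := split_sum (S := μ.support) (fun p => 1 ≤ p.1 ∧ 3 ≤ p.1 + p.2)
    (fun p => p.1 * μ p)
  set g : ℕ × ℕ → ℕ := fun p => if ¬ (1 ≤ p.1 ∧ 3 ≤ p.1 + p.2) then p.1 * μ p else 0 with hg
  set T : Finset (ℕ × ℕ) := {((2 : ℕ), (0 : ℕ)), ((1 : ℕ), (1 : ℕ))} with hT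
  have he1 : ∑ p ∈ μ.support, g p = ∑ p ∈ μ.support ∪ T, g p := by
    refine Finset.sum_subset Finset.subset_union_left fun p hpu hps => ?_
    have h0 : μ p = 0 := Finsupp.notMem_support_iff.mp hps
    simp [hg, h0]
  have he2 : ∑ p ∈ T, g p = ∑ p ∈ μ.support ∪ T, g p := by
    refine Finset.sum_subset Finset.subset_union_right fun p hpu hpt => ?_
    have hps : p ∈ μ.support := by
      rcases Finset.mem_union.mp hpu with h | h
      · exact h
      · exact absurd h hpt
    have h2 := hsupp p hps
    obtain ⟨x, y⟩ := p
    simp only [hT, Finset.mem_insert, Finset.mem_singleton, Prod.mk.injEq] at hpt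
    push_neg at hpt
    by_cases hc : 1 ≤ x ∧ 3 ≤ x + y
    · simp [hg, hc]
    · have hx : x = 0 := by
        simp only at h2
        omega
      simp [hg, hc, hx]
  have hTsum : ∑ p ∈ T, g p = 2 * μ (2, 0) + μ (1, 1) := by
    rw [hT, Finset.sum_pair (by simp)]
    have h1 : g (2, 0) = 2 * μ (2, 0) := by norm_num [hg]
    have h2 : g (1, 1) = 1 * μ (1, 1) := by norm_num [hg]
    rw [h1, h2]
    ring
  have : (μ.sum fun p k => p.1 * k) = ∑ p ∈ μ.support, p.1 * μ p := rfl
  rw [this, hstep]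
  congr 1
  rw [← hTsum, he2, ← he1]

lemma N2 (μ : (ℕ × ℕ) →₀ ℕ) (hsupp : ∀ p ∈ μ.support, 2 ≤ p.1 + p.2)
    (h20 : 1 ≤ μ (2, 0)) :
    (∑ p ∈ μ.support, if 1 ≤ μ (2, 0) ∧ 1 ≤ p.2 ∧ p ≠ ((1 : ℕ), (1 : ℕ)) then p.2 * μ p else 0)
      + μ (1, 1) = μ.sum fun p k => p.2 * k := by
  classical
  have hstep := split_sum (S := μ.support)
    (fun p => 1 ≤ μ (2, 0) ∧ 1 ≤ p.2 ∧ p ≠ ((1 : ℕ), (1 : ℕ))) (fun p => p.2 * μ p)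
  set g : ℕ × ℕ → ℕ := fun p =>
    if ¬ (1 ≤ μ (2, 0) ∧ 1 ≤ p.2 ∧ p ≠ ((1 : ℕ), (1 : ℕ))) then p.2 * μ p else 0 with hg
  set T : Finset (ℕ × ℕ) := {((1 : ℕ), (1 : ℕ))} with hT
  have he1 : ∑ p ∈ μ.support, g p = ∑ p ∈ μ.support ∪ T, g p := by
    refine Finset.sum_subset Finset.subset_union_left fun p hpu hps => ?_
    have h0 : μ p = 0 := Finsupp.notMem_support_iff.mp hps
    simp [hg, h0]
  have he2 : ∑ p ∈ T, g p = ∑ p ∈ μ.support ∪ T, g p := by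
    refine Finset.sum_subset Finset.subset_union_right fun p hpu hpt => ?_
    obtain ⟨x, y⟩ := p
    simp only [hT, Finset.mem_singleton, Prod.mk.injEq] at hpt
    by_cases hc : 1 ≤ μ (2, 0) ∧ 1 ≤ y ∧ ((x : ℕ), (y : ℕ)) ≠ ((1 : ℕ), (1 : ℕ))
    · simp only [hg]
      rw [if_neg (not_not_intro hc)]
    · push_neg at hc
      have hc2 := hc h20
      by_cases hy : 1 ≤ y
      · have : ((x : ℕ), (y : ℕ)) = ((1 : ℕ), (1 : ℕ)) := hc2 hy
        exact absurd (Prod.mk.injEq .. ▸ this) (by simpa [Prod.mk.injEq] using hpt)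
      · have hy0 : y = 0 := by omega
        simp [hg, hy0]
  have hTsum : ∑ p ∈ T, g p = μ (1, 1) := by
    rw [hT, Finset.sum_singleton]
    norm_num [hg, h20]
  have : (μ.sum fun p k => p.2 * k) = ∑ p ∈ μ.support, p.2 * μ p := rfl
  rw [this, hstep]
  congr 1
  rw [← hTsum, he2, ← he1]

lemma le_SR (μ : (ℕ × ℕ) →₀ ℕ) (p : ℕ × ℕ) (hp : p ∈ μ.support) :
    p.2 * μ p ≤ μ.sum fun q k => q.2 * k :=
  Finset.single_le_sum (f := fun q => q.2 * μ q) (fun i _ => Nat.zero_le _) hp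

lemma mu20_zero (n : ℕ) (hn : 2 ≤ n) (μ : (ℕ × ℕ) →₀ ℕ) (hμ : Amem (n + 1) μ)
    (hR : (μ.sum fun p k => p.2 * k) = 0) : μ (2, 0) = 0 := by
  classical
  by_contra h
  have h1 : 1 ≤ μ (2, 0) := Nat.one_le_iff_ne_zero.mpr h
  have hmem : ((2 : ℕ), (0 : ℕ)) ∈ μ.support := Finsupp.mem_support_iff.mpr h
  have hS0 : (μ.sum fun _ k => k) = 1 := by
    have := hμ.2.2
    omega
  have hsum1 : ∑ p ∈ μ.support, μ p = 1 := hS0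
  have hcard : μ.support.card ≤ 1 := by
    have hle : ∑ p ∈ μ.support, 1 ≤ ∑ p ∈ μ.support, μ p :=
      Finset.sum_le_sum fun p hp => Nat.one_le_iff_ne_zero.mpr (Finsupp.mem_support_iff.mp hp)
    simpa [hsum1] using hle
  have hcard1 : μ.support.card = 1 :=
    le_antisymm hcard (Finset.card_pos.mpr ⟨_, hmem⟩)
  obtain ⟨x, hx⟩ := Finset.card_eq_one.mp hcard1
  have hx20 : x = ((2 : ℕ), (0 : ℕ)) := by
    have h2 := hx ▸ hmem
    have := Finset.mem_singleton.mp h2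
    exact this.symm
  have hL : (μ.sum fun p k => p.1 * k) = 2 * μ (2, 0) := by
    show ∑ p ∈ μ.support, p.1 * μ p = 2 * μ (2, 0)
    rw [hx, hx20, Finset.sum_singleton]
  have hval : μ (2, 0) = 1 := by
    rw [hx, hx20, Finset.sum_singleton] at hsum1
    exact hsum1
  have := hμ.2.1
  rw [hL, hval] at this
  omega

lemma mu11_zero (μ : (ℕ × ℕ) →₀ ℕ) (hR : (μ.sum fun p k => p.2 * k) = 0) :
    μ (1, 1) = 0 := by
  by_contra h
  have hmem : ((1 : ℕ), (1 : ℕ)) ∈ μ.support := Finsupp.mem_support_iff.mpr h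
  have := le_SR μ _ hmem
  simp only at this
  omega

theorem statement11 (n : ℕ) (hn : 2 ≤ n) (μ : (ℕ × ℕ) →₀ ℕ) (hμ : Amem (n + 1) μ) :
    Ccoef μ =
      (∑ p ∈ μ.support.filter fun p : ℕ × ℕ => 2 ≤ p.1 + p.2,
        ((if 1 ≤ p.1 ∧ 3 ≤ p.1 + p.2 then
            ((μ (p.1 - 1, p.2) : ℝ) + 1) * Ccoef (minusOp μ p.1 p.2) else 0) +
         (if 1 ≤ μ (2, 0) ∧ 1 ≤ p.2 ∧ p ≠ (1, 1) then
            ((p.1 : ℝ) + 1) * ((μ (p.1 + 1, p.2 - 1) : ℝ) + 1) * Ccoef (bOp μ p.1 p.2)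
          else 0))) +
      (if 1 ≤ μ (1, 1) then
        2 * (μ (2, 0) : ℝ) * Ccoef (dOp μ) +
          ((μ.sum fun p k => p.2 * k : ℕ) : ℝ) * Ccoef (dOp μ)
       else 0) := by
  classical
  have hsupp := hμ.1
  have hL := hμ.2.1
  have hS0 := hμ.2.2
  have hfilter : (μ.support.filter fun p : ℕ × ℕ => 2 ≤ p.1 + p.2) = μ.support :=
    Finset.filter_true_of_mem hsupp
  rw [hfilter, Finset.sum_add_distrib]
  have hLcast : (((μ.sum fun p k => p.1 * k) : ℕ) : ℝ) = (n : ℝ) + 1 := by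
    rw [hL]; push_cast; ring
  have hnpos : (0 : ℝ) < (n : ℝ) + 1 := by positivity
  -- per-term t1 identity
  have ht1 : ∀ p ∈ μ.support,
      (if 1 ≤ p.1 ∧ 3 ≤ p.1 + p.2 then
         ((μ (p.1 - 1, p.2) : ℝ) + 1) * Ccoef (minusOp μ p.1 p.2) else 0) * ((n : ℝ) + 1)
      = (if 1 ≤ p.1 ∧ 3 ≤ p.1 + p.2 then ((p.1 * μ p : ℕ) : ℝ) else 0) * Ccoef μ := by
    rintro ⟨l, r⟩ hp
    by_cases hc : 1 ≤ l ∧ 3 ≤ l + r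
    · rw [if_pos hc, if_pos hc]
      have hb : 1 ≤ μ (l, r) := Nat.one_le_iff_ne_zero.mpr (Finsupp.mem_support_iff.mp hp)
      have hkey := P1 μ l r hc.1 hc.2 hb
      rw [hLcast] at hkey
      push_cast
      push_cast at hkey
      linear_combination hkey
    · rw [if_neg hc, if_neg hc]; ring
  have hsum1 : (∑ p ∈ μ.support, if 1 ≤ p.1 ∧ 3 ≤ p.1 + p.2 then
         ((μ (p.1 - 1, p.2) : ℝ) + 1) * Ccoef (minusOp μ p.1 p.2) else 0) * ((n : ℝ) + 1)
      = ((∑ p ∈ μ.support, if 1 ≤ p.1 ∧ 3 ≤ p.1 + p.2 then p.1 * μ p else 0 : ℕ) : ℝ)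
        * Ccoef μ := by
    rw [Finset.sum_mul, Finset.sum_congr rfl ht1, ← Finset.sum_mul]
    congr 1
    push_cast
    rfl
  by_cases hR0 : (μ.sum fun p k => p.2 * k) = 0
  · -- degenerate case R = 0
    have h20 : μ (2, 0) = 0 := mu20_zero n hn μ hμ hR0
    have h11 : μ (1, 1) = 0 := mu11_zero μ hR0
    have hd0 : (if 1 ≤ μ (1, 1) then
        2 * (μ (2, 0) : ℝ) * Ccoef (dOp μ) +
          ((μ.sum fun p k => p.2 * k : ℕ) : ℝ) * Ccoef (dOp μ) else 0) = 0 := by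
      rw [if_neg (by omega : ¬ 1 ≤ μ (1, 1))]
    have ht20 : (∑ p ∈ μ.support, if 1 ≤ μ (2, 0) ∧ 1 ≤ p.2 ∧ p ≠ ((1:ℕ), (1:ℕ)) then
        ((p.1 : ℝ) + 1) * ((μ (p.1 + 1, p.2 - 1) : ℝ) + 1) * Ccoef (bOp μ p.1 p.2)
        else 0) = 0 := by
      refine Finset.sum_eq_zero fun p hp => ?_
      rw [if_neg]
      rintro ⟨-, h2, -⟩
      have hb : μ p ≠ 0 := Finsupp.mem_support_iff.mp hp
      have hle := le_SR μ p hp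
      rw [hR0] at hle
      have h0 : p.2 * μ p = 0 := Nat.le_zero.mp hle
      rcases Nat.mul_eq_zero.mp h0 with h | h
      · omega
      · exact hb h
    rw [hd0, ht20]
    have hA : (∑ p ∈ μ.support, if 1 ≤ p.1 ∧ 3 ≤ p.1 + p.2 then p.1 * μ p else 0) = n + 1 := by
      have := N1 μ hsupp
      rw [hL, h20, h11] at this
      omega
    rw [hA] at hsum1
    have : Ccoef μ * ((n : ℝ) + 1)
        = (∑ p ∈ μ.support, if 1 ≤ p.1 ∧ 3 ≤ p.1 + p.2 then
            ((μ (p.1 - 1, p.2) : ℝ) + 1) * Ccoef (minusOp μ p.1 p.2) else 0) * ((n : ℝ) + 1) := by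
      rw [hsum1]
      push_cast
      ring
    have hfin := mul_right_cancel₀ (ne_of_gt hnpos) this
    rw [← hfin]
    ring
  · -- main case R ≥ 1
    have hR1 : 1 ≤ (μ.sum fun p k => p.2 * k) := Nat.one_le_iff_ne_zero.mpr hR0
    have hRpos : (0 : ℝ) < (((μ.sum fun p k => p.2 * k) : ℕ) : ℝ) := by
      have : (1 : ℝ) ≤ (((μ.sum fun p k => p.2 * k) : ℕ) : ℝ) := by exact_mod_cast hR1
      linarith
    -- per-term t2 identity
    have ht2 : ∀ p ∈ μ.support,
        (if 1 ≤ μ (2, 0) ∧ 1 ≤ p.2 ∧ p ≠ ((1:ℕ), (1:ℕ)) then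
          ((p.1 : ℝ) + 1) * ((μ (p.1 + 1, p.2 - 1) : ℝ) + 1) * Ccoef (bOp μ p.1 p.2)
          else 0) * (((n : ℝ) + 1) * (((μ.sum fun p k => p.2 * k) : ℕ) : ℝ))
        = (if 1 ≤ μ (2, 0) ∧ 1 ≤ p.2 ∧ p ≠ ((1:ℕ), (1:ℕ)) then
            ((2 * μ (2, 0) * (p.2 * μ p) : ℕ) : ℝ) else 0) * Ccoef μ := by
      rintro ⟨l, r⟩ hp
      by_cases hc : 1 ≤ μ (2, 0) ∧ 1 ≤ (l, r).2 ∧ ((l : ℕ), (r : ℕ)) ≠ ((1:ℕ), (1:ℕ))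
      · rw [if_pos hc, if_pos hc]
        have hb : 1 ≤ μ (l, r) := Nat.one_le_iff_ne_zero.mpr (Finsupp.mem_support_iff.mp hp)
        have hkey := P2 μ l r hc.1 hc.2.1 hc.2.2 hb
        rw [hLcast] at hkey
        simp only [Nat.cast_mul, Nat.cast_ofNat]
        linear_combination hkey
      · rw [if_neg hc, if_neg hc]; ring
    have hsum2 : (∑ p ∈ μ.support, if 1 ≤ μ (2, 0) ∧ 1 ≤ p.2 ∧ p ≠ ((1:ℕ), (1:ℕ)) then
          ((p.1 : ℝ) + 1) * ((μ (p.1 + 1, p.2 - 1) : ℝ) + 1) * Ccoef (bOp μ p.1 p.2)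
          else 0) * (((n : ℝ) + 1) * (((μ.sum fun p k => p.2 * k) : ℕ) : ℝ))
        = ((∑ p ∈ μ.support, if 1 ≤ μ (2, 0) ∧ 1 ≤ p.2 ∧ p ≠ ((1:ℕ), (1:ℕ)) then
            2 * μ (2, 0) * (p.2 * μ p) else 0 : ℕ) : ℝ) * Ccoef μ := by
      rw [Finset.sum_mul, Finset.sum_congr rfl ht2, ← Finset.sum_mul]
      congr 1
      push_cast
      rfl
    -- d-term identity
    have hd : (if 1 ≤ μ (1, 1) then
        2 * (μ (2, 0) : ℝ) * Ccoef (dOp μ) +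
          ((μ.sum fun p k => p.2 * k : ℕ) : ℝ) * Ccoef (dOp μ) else 0) * (((n : ℝ) + 1) * (((μ.sum fun p k => p.2 * k) : ℕ) : ℝ))
        = (if 1 ≤ μ (1, 1) then
            ((2 * μ (2, 0) * μ (1, 1) + (μ.sum fun p k => p.2 * k) * μ (1, 1) : ℕ) : ℝ)
          else 0) * Ccoef μ := by
      by_cases hc : 1 ≤ μ (1, 1)
      · rw [if_pos hc, if_pos hc]
        have hkey := P3 μ hc
        rw [hLcast] at hkey
        simp only [Nat.cast_add, Nat.cast_mul, Nat.cast_ofNat]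
        linear_combination (2 * (μ (2, 0) : ℝ) + (((μ.sum fun p k => p.2 * k) : ℕ) : ℝ)) * hkey
      · rw [if_neg hc, if_neg hc]; ring
    -- the nat-level counting identity
    set A : ℕ := ∑ p ∈ μ.support, if 1 ≤ p.1 ∧ 3 ≤ p.1 + p.2 then p.1 * μ p else 0 with hAdef
    set B2 : ℕ := ∑ p ∈ μ.support, if 1 ≤ μ (2, 0) ∧ 1 ≤ p.2 ∧ p ≠ ((1:ℕ), (1:ℕ)) then
      2 * μ (2, 0) * (p.2 * μ p) else 0 with hB2def
    set B : ℕ := ∑ p ∈ μ.support, if 1 ≤ μ (2, 0) ∧ 1 ≤ p.2 ∧ p ≠ ((1:ℕ), (1:ℕ)) then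
      p.2 * μ p else 0 with hBdef
    have hB2 : B2 = 2 * μ (2, 0) * B := by
      rw [hB2def, hBdef, Finset.mul_sum]
      refine Finset.sum_congr rfl fun p _ => ?_
      by_cases hc : 1 ≤ μ (2, 0) ∧ 1 ≤ p.2 ∧ p ≠ ((1:ℕ), (1:ℕ)) <;> simp [hc]
    have keynat : A * (μ.sum fun p k => p.2 * k) + B2
        + (2 * μ (2, 0) * μ (1, 1) + (μ.sum fun p k => p.2 * k) * μ (1, 1))
        = (n + 1) * (μ.sum fun p k => p.2 * k) := by
      have hN1 : A + (2 * μ (2, 0) + μ (1, 1)) = n + 1 := by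
        rw [hAdef]; rw [N1 μ hsupp, hL]
      rw [hB2]
      rcases Nat.eq_zero_or_pos (μ (2, 0)) with h | h
      · rw [h] at hN1 ⊢
        simp only [Nat.mul_zero, Nat.zero_mul, Nat.mul_one, Nat.zero_add, Nat.add_zero,
          Nat.mul_zero]
        rw [← hN1]
        ring
      · have hN2 : B + μ (1, 1) = (μ.sum fun p k => p.2 * k) := by
          rw [hBdef]; exact N2 μ hsupp h
        rw [← hN1, ← hN2]
        ring
    have hkeyR : (A : ℝ) * (((μ.sum fun p k => p.2 * k) : ℕ) : ℝ) + (B2 : ℝ)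
        + (2 * (μ (2, 0) : ℝ) * (μ (1, 1) : ℝ)
            + (((μ.sum fun p k => p.2 * k) : ℕ) : ℝ) * (μ (1, 1) : ℝ))
        = ((n : ℝ) + 1) * (((μ.sum fun p k => p.2 * k) : ℕ) : ℝ) := by
      have hcast := congrArg (Nat.cast : ℕ → ℝ) keynat
      simp only [Nat.cast_add, Nat.cast_mul, Nat.cast_ofNat, Nat.cast_one] at hcast
      linear_combination hcast
    -- d-term with the `if` resolved
    have hd2 : (if 1 ≤ μ (1, 1) then
        2 * (μ (2, 0) : ℝ) * Ccoef (dOp μ) +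
          ((μ.sum fun p k => p.2 * k : ℕ) : ℝ) * Ccoef (dOp μ) else 0)
          * (((n : ℝ) + 1) * (((μ.sum fun p k => p.2 * k) : ℕ) : ℝ))
        = (2 * (μ (2, 0) : ℝ) * (μ (1, 1) : ℝ)
            + (((μ.sum fun p k => p.2 * k) : ℕ) : ℝ) * (μ (1, 1) : ℝ)) * Ccoef μ := by
      rw [hd]
      by_cases hc : 1 ≤ μ (1, 1)
      · rw [if_pos hc]
        simp only [Nat.cast_add, Nat.cast_mul, Nat.cast_ofNat]
      · rw [if_neg hc]
        have h0 : μ (1, 1) = 0 := by omega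
        rw [h0]
        push_cast
        ring
    have hmain : Ccoef μ * (((n : ℝ) + 1) * (((μ.sum fun p k => p.2 * k) : ℕ) : ℝ))
        = ((∑ p ∈ μ.support, if 1 ≤ p.1 ∧ 3 ≤ p.1 + p.2 then
            ((μ (p.1 - 1, p.2) : ℝ) + 1) * Ccoef (minusOp μ p.1 p.2) else 0)
          + (∑ p ∈ μ.support, if 1 ≤ μ (2, 0) ∧ 1 ≤ p.2 ∧ p ≠ ((1:ℕ), (1:ℕ)) then
              ((p.1 : ℝ) + 1) * ((μ (p.1 + 1, p.2 - 1) : ℝ) + 1) * Ccoef (bOp μ p.1 p.2) else 0)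
          + (if 1 ≤ μ (1, 1) then
              2 * (μ (2, 0) : ℝ) * Ccoef (dOp μ) +
                ((μ.sum fun p k => p.2 * k : ℕ) : ℝ) * Ccoef (dOp μ) else 0))
          * (((n : ℝ) + 1) * (((μ.sum fun p k => p.2 * k) : ℕ) : ℝ)) := by
      linear_combination (-(((μ.sum fun p k => p.2 * k : ℕ) : ℝ)) * hsum1) - hsum2 - hd2
        - Ccoef μ * hkeyR
    have hne : (((n : ℝ) + 1) * (((μ.sum fun p k => p.2 * k) : ℕ) : ℝ)) ≠ 0 :=
      ne_of_gt (by positivity)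
    exact mul_right_cancel₀ hne hmain
end

section
/- Let (s_{p,t}) be a finitely supported family of nonnegative integers indexed by pairs (p, t) with p + t ≥ 2, let k ≥ 1 be such that Σ_{p,t} t·s_{p,t} = k − 1, and let s_{1,0} be an integer with 0 ≤ s_{1,0} ≤ k − 1. Then Σ_{(q_{p,t,j}) ∈ Z_γ} ∏_{p+t≥2} [s_{p,t}! · ∏_{j=0}^{t} binom(t, j)^{q_{p,t,j}} / q_{p,t,j}!] = binom(k − 1, s_{1,0}). -/
/-- Membership in the set `Z_γ`, formed from the entries `s_{p,t}` for `p + t ≥ 2`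
together with a nonnegative integer `s10` (playing the role of `s_{1,0}`): families
`(q_{p,t,j})` indexed by triples `(p, t, j)` with `p + t ≥ 2` and `0 ≤ j ≤ t`, with
`Σ_{j=0}^{t} q_{p,t,j} = s_{p,t}` for every such `(p, t)` and `Σ j·q_{p,t,j} = s10`. -/
def Zmem (s : (ℕ × ℕ) →₀ ℕ) (s10 : ℕ) (q : (ℕ × ℕ × ℕ) →₀ ℕ) : Prop :=
  (∀ v ∈ q.support, 2 ≤ v.1 + v.2.1 ∧ v.2.2 ≤ v.2.1) ∧
  (∀ p t : ℕ, 2 ≤ p + t → (∑ j ∈ Finset.range (t + 1), q (p, t, j)) = s (p, t)) ∧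
  (q.sum fun v k => v.2.2 * k) = s10


lemma zmem_finite (s : (ℕ × ℕ) →₀ ℕ) (s10 : ℕ) :
    {q : (ℕ × ℕ × ℕ) →₀ ℕ | Zmem s s10 q}.Finite := by
  classical
  set g : (ℕ × ℕ × ℕ) →₀ ℕ :=
    s.sum (fun v c => ∑ j ∈ Finset.range (v.2 + 1), Finsupp.single (v.1, v.2, j) c) with hg
  refine (Set.finite_Iic g).subset ?_
  rintro q ⟨h1, h2, -⟩
  rw [Set.mem_Iic, Finsupp.le_def]
  intro v
  by_cases hv : q v = 0
  · simp [hv]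
  have hmem : v ∈ q.support := Finsupp.mem_support_iff.2 hv
  obtain ⟨hpt, hjt⟩ := h1 v hmem
  obtain ⟨p, t, j⟩ := v
  have h1' : q (p, t, j) ≤ s (p, t) := by
    rw [← h2 p t hpt]
    exact Finset.single_le_sum (f := fun j' => q (p, t, j')) (fun i _ => Nat.zero_le _)
      (Finset.mem_range.2 (Nat.lt_succ_of_le hjt))
  refine h1'.trans ?_
  by_cases hs0 : s (p, t) = 0
  · simp [hs0]
  have hsmem : (p, t) ∈ s.support := Finsupp.mem_support_iff.2 hs0
  have hgv : g (p, t, j) = ∑ u ∈ s.support,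
      ∑ j' ∈ Finset.range (u.2 + 1), (Finsupp.single (u.1, u.2, j') (s u)) (p, t, j) := by
    rw [hg, Finsupp.sum, Finset.sum_apply']
    refine Finset.sum_congr rfl fun u _ => ?_
    rw [Finset.sum_apply']
  rw [hgv]
  calc s (p, t) = (Finsupp.single ((p, t).1, (p, t).2, j) (s (p, t))) (p, t, j) := by simp
    _ ≤ ∑ j' ∈ Finset.range ((p, t).2 + 1),
          (Finsupp.single ((p, t).1, (p, t).2, j') (s (p, t))) (p, t, j) :=
        Finset.single_le_sum
          (f := fun j' => (Finsupp.single ((p, t).1, (p, t).2, j') (s (p, t))) (p, t, j))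
          (fun i _ => Nat.zero_le _)
          (Finset.mem_range.2 (Nat.lt_succ_of_le hjt))
    _ ≤ _ := Finset.single_le_sum
          (f := fun u => ∑ j' ∈ Finset.range (u.2 + 1), (Finsupp.single (u.1, u.2, j') (s u)) (p, t, j))
          (fun i _ => Nat.zero_le _) hsmem

noncomputable def Zf (s : (ℕ × ℕ) →₀ ℕ) (s10 : ℕ) : Finset ((ℕ × ℕ × ℕ) →₀ ℕ) :=
  (zmem_finite s s10).toFinset

lemma mem_Zf {s : (ℕ × ℕ) →₀ ℕ} {s10 : ℕ} {q : (ℕ × ℕ × ℕ) →₀ ℕ} :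
    q ∈ Zf s s10 ↔ Zmem s s10 q := Set.Finite.mem_toFinset _

noncomputable def W (s : (ℕ × ℕ) →₀ ℕ) (q : (ℕ × ℕ × ℕ) →₀ ℕ) : ℝ :=
  (s.prod fun _ c => (c.factorial : ℝ)) *
    q.prod fun v c => (v.2.1.choose v.2.2 : ℝ) ^ c / (c.factorial : ℝ)

lemma single_row_sum (p₀ t₀ j p t : ℕ) (hj : j ≤ t₀) :
    (∑ j' ∈ Finset.range (t + 1), (Finsupp.single ((p₀, t₀, j) : ℕ × ℕ × ℕ) 1) (p, t, j'))
      = (Finsupp.single ((p₀, t₀) : ℕ × ℕ) 1) (p, t) := by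
  by_cases h : (p, t) = ((p₀, t₀) : ℕ × ℕ)
  · obtain ⟨rfl, rfl⟩ : p₀ = p ∧ t₀ = t := Prod.mk.inj h.symm
    simp only [Finsupp.single_apply, Prod.mk.injEq, true_and]
    rw [Finset.sum_ite_eq _ j fun _ => (1 : ℕ)]
    simp [Nat.lt_succ_of_le hj]
  · have h1 : (Finsupp.single ((p₀, t₀) : ℕ × ℕ) 1) (p, t) = 0 := by
      rw [Finsupp.single_apply, if_neg (fun hh => h hh.symm)]
    rw [h1]
    refine Finset.sum_eq_zero fun j' _ => ?_
    rw [Finsupp.single_apply, if_neg]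
    intro hh
    exact h (by injection hh with h1 h2; injection h2 with h2 h3; simp [h1, h2])

lemma zmem_add_iff (s' : (ℕ × ℕ) →₀ ℕ) (m j p₀ t₀ : ℕ) (hpt : 2 ≤ p₀ + t₀) (hj : j ≤ t₀)
    (q' : (ℕ × ℕ × ℕ) →₀ ℕ) :
    Zmem (s' + Finsupp.single (p₀, t₀) 1) (m + j) (q' + Finsupp.single (p₀, t₀, j) 1) ↔
      Zmem s' m q' := by
  have hsum3 : ((q' + Finsupp.single (p₀, t₀, j) 1).sum fun v k => v.2.2 * k)
      = (q'.sum fun v k => v.2.2 * k) + j := by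
    rw [Finsupp.sum_add_index' (fun a => by simp) (fun a b₁ b₂ => Nat.mul_add _ _ _),
        Finsupp.sum_single_index (by simp)]
    simp
  have hrow : ∀ p t : ℕ,
      (∑ j' ∈ Finset.range (t + 1), (q' + Finsupp.single (p₀, t₀, j) 1 : (ℕ × ℕ × ℕ) →₀ ℕ) (p, t, j'))
        = (∑ j' ∈ Finset.range (t + 1), q' (p, t, j'))
            + (Finsupp.single ((p₀, t₀) : ℕ × ℕ) 1) (p, t) := by
    intro p t
    simp only [Finsupp.add_apply]
    rw [Finset.sum_add_distrib, single_row_sum p₀ t₀ j p t hj]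
  constructor
  · rintro ⟨h1, h2, h3⟩
    refine ⟨?_, ?_, ?_⟩
    · intro v hv
      apply h1
      simp only [Finsupp.mem_support_iff, Finsupp.add_apply] at hv ⊢
      omega
    · intro p t hpt'
      have := h2 p t hpt'
      rw [hrow, Finsupp.add_apply] at this
      omega
    · rw [hsum3] at h3; omega
  · rintro ⟨h1, h2, h3⟩
    refine ⟨?_, ?_, ?_⟩
    · intro v hv
      rw [Finsupp.mem_support_iff, Finsupp.add_apply] at hv
      by_cases hq : q' v = 0
      · have hδ : (Finsupp.single ((p₀, t₀, j) : ℕ × ℕ × ℕ) 1) v ≠ 0 := by omega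
        have : v = (p₀, t₀, j) := by
          by_contra hne
          rw [Finsupp.single_apply, if_neg (fun hh => hne hh.symm)] at hδ
          exact hδ rfl
        subst this
        exact ⟨hpt, hj⟩
      · exact h1 v (Finsupp.mem_support_iff.2 hq)
    · intro p t hpt'
      rw [hrow, h2 p t hpt', Finsupp.add_apply]
    · rw [hsum3, h3]

lemma zmem_bound {s : (ℕ × ℕ) →₀ ℕ} {s10 : ℕ} {q : (ℕ × ℕ × ℕ) →₀ ℕ}
    (h : Zmem s s10 q) (v : ℕ × ℕ × ℕ) (hv : q v ≠ 0) : v.2.2 * q v ≤ s10 := by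
  obtain ⟨-, -, h3⟩ := h
  rw [← h3, Finsupp.sum]
  exact Finset.single_le_sum (f := fun v => v.2.2 * q v) (fun i _ => Nat.zero_le _)
    (Finsupp.mem_support_iff.2 hv)

lemma W_add (s' : (ℕ × ℕ) →₀ ℕ) (p₀ t₀ j : ℕ) (q' : (ℕ × ℕ × ℕ) →₀ ℕ) :
    W (s' + Finsupp.single (p₀, t₀) 1) (q' + Finsupp.single (p₀, t₀, j) 1) *
        ((q' (p₀, t₀, j) : ℝ) + 1)
      = (t₀.choose j : ℝ) * ((s' (p₀, t₀) : ℝ) + 1) * W s' q' := by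
  classical
  set v₀' : ℕ × ℕ := (p₀, t₀) with hv₀'
  set v₀ : ℕ × ℕ × ℕ := (p₀, t₀, j) with hv₀
  set sB : (ℕ × ℕ) →₀ ℕ := s' + Finsupp.single v₀' 1 with hsB
  set qB : (ℕ × ℕ × ℕ) →₀ ℕ := q' + Finsupp.single v₀ 1 with hqB
  have hsv : sB v₀' = s' v₀' + 1 := by simp [hsB]
  have hqv : qB v₀ = q' v₀ + 1 := by simp [hqB]
  have hsS : s'.support ⊆ sB.support := by
    intro v hv
    simp only [Finsupp.mem_support_iff, hsB, Finsupp.add_apply] at hv ⊢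
    omega
  have hqS : q'.support ⊆ qB.support := by
    intro v hv
    simp only [Finsupp.mem_support_iff, hqB, Finsupp.add_apply] at hv ⊢
    omega
  have hv₀S : v₀' ∈ sB.support := by
    rw [Finsupp.mem_support_iff, hsv]; omega
  have hv₀Q : v₀ ∈ qB.support := by
    rw [Finsupp.mem_support_iff, hqv]; omega
  have hsEq : ∀ v ∈ sB.support.erase v₀', sB v = s' v := by
    intro v hv
    have hne : v ≠ v₀' := Finset.ne_of_mem_erase hv
    simp only [hsB, Finsupp.add_apply, Finsupp.single_apply,
      if_neg (fun hh : v₀' = v => hne hh.symm), add_zero]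
  have hqEq : ∀ v ∈ qB.support.erase v₀, qB v = q' v := by
    intro v hv
    have hne : v ≠ v₀ := Finset.ne_of_mem_erase hv
    simp only [hqB, Finsupp.add_apply, Finsupp.single_apply,
      if_neg (fun hh : v₀ = v => hne hh.symm), add_zero]
  have hPs : sB.prod (fun _ c => (c.factorial : ℝ))
      = ((s' v₀' + 1).factorial : ℝ) * ∏ v ∈ sB.support.erase v₀', ((s' v).factorial : ℝ) := by
    rw [Finsupp.prod, ← Finset.mul_prod_erase _ _ hv₀S, hsv]
    congr 1
    exact Finset.prod_congr rfl fun v hv => by rw [hsEq v hv]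
  have hPs' : s'.prod (fun _ c => (c.factorial : ℝ))
      = ((s' v₀').factorial : ℝ) * ∏ v ∈ sB.support.erase v₀', ((s' v).factorial : ℝ) := by
    rw [Finsupp.prod_of_support_subset s' hsS _ (fun i _ => by simp),
        ← Finset.mul_prod_erase _ _ hv₀S]
  have hPq : qB.prod (fun v c => (v.2.1.choose v.2.2 : ℝ) ^ c / (c.factorial : ℝ))
      = ((t₀.choose j : ℝ) ^ (q' v₀ + 1) / ((q' v₀ + 1).factorial : ℝ)) *
          ∏ v ∈ qB.support.erase v₀, ((v.2.1.choose v.2.2 : ℝ) ^ (q' v) / ((q' v).factorial : ℝ)) := by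
    rw [Finsupp.prod, ← Finset.mul_prod_erase _ _ hv₀Q, hqv]
    congr 1
    exact Finset.prod_congr rfl fun v hv => by rw [hqEq v hv]
  have hPq' : q'.prod (fun v c => (v.2.1.choose v.2.2 : ℝ) ^ c / (c.factorial : ℝ))
      = ((t₀.choose j : ℝ) ^ (q' v₀) / ((q' v₀).factorial : ℝ)) *
          ∏ v ∈ qB.support.erase v₀, ((v.2.1.choose v.2.2 : ℝ) ^ (q' v) / ((q' v).factorial : ℝ)) := by
    rw [Finsupp.prod_of_support_subset q' hqS _ (fun i _ => by simp),
        ← Finset.mul_prod_erase _ _ hv₀Q]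
  rw [W, W, hPs, hPs', hPq, hPq']
  have hcf : ((q' v₀).factorial : ℝ) ≠ 0 := Nat.cast_ne_zero.2 (Nat.factorial_ne_zero _)
  rw [Nat.factorial_succ (s' v₀'), Nat.factorial_succ (q' v₀)]
  push_cast
  field_simp
  ring

lemma vand (a b n : ℕ) :
    (a + b).choose n
      = ∑ j ∈ Finset.range (a + 1), if j ≤ n then a.choose j * b.choose (n - j) else 0 := by
  rw [Nat.add_choose_eq, Finset.Nat.sum_antidiagonal_eq_sum_range_succ_mk]
  have e0 : ∑ k ∈ Finset.range n.succ, a.choose (k, n - k).1 * b.choose (k, n - k).2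
      = ∑ k ∈ Finset.range (n + 1), if k ≤ n then a.choose k * b.choose (n - k) else 0 :=
    Finset.sum_congr rfl fun k hk =>
      (if_pos (Nat.lt_succ_iff.1 (Finset.mem_range.1 hk))).symm
  rw [e0]
  have e1 : ∑ k ∈ Finset.range (n + 1), (if k ≤ n then a.choose k * b.choose (n - k) else 0)
      = ∑ k ∈ Finset.range (a + n + 2), if k ≤ n then a.choose k * b.choose (n - k) else 0 := by
    apply Finset.sum_subset (Finset.range_subset_range.2 (by omega))
    intro x hx hnx
    rw [Finset.mem_range] at hnx
    rw [if_neg (by omega)]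
  have e2 : ∑ k ∈ Finset.range (a + 1), (if k ≤ n then a.choose k * b.choose (n - k) else 0)
      = ∑ k ∈ Finset.range (a + n + 2), if k ≤ n then a.choose k * b.choose (n - k) else 0 := by
    apply Finset.sum_subset (Finset.range_subset_range.2 (by omega))
    intro x hx hnx
    rw [Finset.mem_range] at hnx
    split_ifs with h
    · rw [Nat.choose_eq_zero_of_lt (by omega), Nat.zero_mul]
    · rfl
  rw [e1, ← e2]

lemma main_ind : ∀ (n : ℕ) (s : (ℕ × ℕ) →₀ ℕ), (∀ p ∈ s.support, 2 ≤ p.1 + p.2) →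
    (s.sum fun _ c => c) = n → ∀ s10 : ℕ,
    (∑ q ∈ Zf s s10, W s q) = ((s.sum fun p c => p.2 * c).choose s10 : ℝ) := by
  intro n
  induction n with
  | zero =>
    intro s hsupp hn s10
    have hs : s = 0 := by
      ext v
      rw [Finsupp.sum] at hn
      by_cases hv : v ∈ s.support
      · exact Finset.sum_eq_zero_iff.1 hn v hv
      · simpa using Finsupp.notMem_support_iff.1 hv
    subst hs
    have hZ : ∀ q : (ℕ × ℕ × ℕ) →₀ ℕ, q ∈ Zf 0 s10 ↔ (q = 0 ∧ s10 = 0) := by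
      intro q
      rw [mem_Zf]
      constructor
      · rintro ⟨h1, h2, h3⟩
        have hq : q = 0 := by
          ext v
          by_contra hv
          have hv' : ¬ q v = 0 := by simpa using hv
          have hvs : v ∈ q.support := Finsupp.mem_support_iff.2 hv'
          obtain ⟨hpt, hjt⟩ := h1 v hvs
          have hrow := h2 v.1 v.2.1 hpt
          simp only [Finsupp.coe_zero, Pi.zero_apply] at hrow
          have hle : q (v.1, v.2.1, v.2.2) ≤ ∑ j ∈ Finset.range (v.2.1 + 1), q (v.1, v.2.1, j) :=
            Finset.single_le_sum (f := fun j' => q (v.1, v.2.1, j')) (fun i _ => Nat.zero_le _)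
              (Finset.mem_range.2 (Nat.lt_succ_of_le hjt))
          rw [hrow] at hle
          exact hv' (by simpa using Nat.le_zero.1 hle)
        subst hq
        rw [Finsupp.sum_zero_index] at h3
        exact ⟨rfl, h3.symm⟩
      · rintro ⟨rfl, rfl⟩
        exact ⟨by simp, fun p t _ => by simp, by rw [Finsupp.sum_zero_index]⟩
    by_cases h10 : s10 = 0
    · subst h10
      have : Zf 0 0 = {0} := Finset.ext fun q => by rw [hZ]; simp
      rw [this]
      simp [W, Finsupp.prod_zero_index, Finsupp.sum_zero_index]
    · have : Zf 0 s10 = ∅ := Finset.ext fun q => by rw [hZ]; simp [h10]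
      rw [this]
      rw [Finsupp.sum_zero_index, Nat.choose_eq_zero_of_lt (by omega)]
      simp
  | succ n ih =>
    intro s hsupp hn s10
    classical
    have hsne : s.support.Nonempty := by
      by_contra h
      rw [Finset.not_nonempty_iff_eq_empty] at h
      rw [Finsupp.sum, h] at hn
      simp at hn
    obtain ⟨⟨p₀, t₀⟩, hv₀⟩ := hsne
    have hpt₀ : 2 ≤ p₀ + t₀ := hsupp _ hv₀
    have hs₀ : 1 ≤ s (p₀, t₀) := Nat.one_le_iff_ne_zero.2 (Finsupp.mem_support_iff.1 hv₀)
    set s' : (ℕ × ℕ) →₀ ℕ := s - Finsupp.single (p₀, t₀) 1 with hs'def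
    have hss : s = s' + Finsupp.single (p₀, t₀) 1 :=
      (tsub_add_cancel_of_le (Finsupp.single_le_iff.2 hs₀)).symm
    have hs'le : ∀ p, s' p ≤ s p := by
      intro p
      rw [hs'def, Finsupp.tsub_apply]
      exact Nat.sub_le _ _
    have hsupp' : ∀ p ∈ s'.support, 2 ≤ p.1 + p.2 := by
      intro p hp
      apply hsupp
      rw [Finsupp.mem_support_iff] at hp ⊢
      have := hs'le p
      omega
    have hn' : (s'.sum fun _ c => c) = n := by
      have h := congrArg (fun f : (ℕ × ℕ) →₀ ℕ => f.sum fun _ c => c) hss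
      rw [Finsupp.sum_add_index' (fun _ => rfl) (fun _ _ _ => rfl),
          Finsupp.sum_single_index rfl] at h
      omega
    set N' := s'.sum fun p c => p.2 * c with hN'
    have hN : (s.sum fun p c => p.2 * c) = N' + t₀ := by
      have h := congrArg (fun f : (ℕ × ℕ) →₀ ℕ => f.sum fun p c => p.2 * c) hss
      rw [Finsupp.sum_add_index' (fun a => by simp) (fun a b c => Nat.mul_add _ _ _),
          Finsupp.sum_single_index (by simp)] at h
      simpa using h
    have hsv : s (p₀, t₀) = s' (p₀, t₀) + 1 := by
      rw [hss]; simp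
    -- Step B
    have hB : ∀ j, j ≤ t₀ →
        (∑ q ∈ Zf s s10, W s q * (q (p₀, t₀, j) : ℝ))
          = if j ≤ s10 then
              (t₀.choose j : ℝ) * (s (p₀, t₀) : ℝ) * ∑ q' ∈ Zf s' (s10 - j), W s' q'
            else 0 := by
      intro j hj
      by_cases hjs : j ≤ s10
      · rw [if_pos hjs]
        have hs10eq : s10 - j + j = s10 := Nat.sub_add_cancel hjs
        have key := fun q' => zmem_add_iff s' (s10 - j) j p₀ t₀ hpt₀ hj q'
        rw [← Finset.sum_filter_of_ne (p := fun q => q (p₀, t₀, j) ≠ 0)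
            (fun q hq hne h0 => hne (by rw [h0]; simp))]
        rw [Finset.mul_sum]
        refine Finset.sum_nbij' (i := fun q => q - Finsupp.single (p₀, t₀, j) 1)
          (j := fun q' => q' + Finsupp.single (p₀, t₀, j) 1) ?_ ?_ ?_ ?_ ?_
        · intro a ha
          obtain ⟨haZ, hane⟩ := Finset.mem_filter.1 ha
          have hq1 : 1 ≤ a (p₀, t₀, j) := Nat.one_le_iff_ne_zero.2 hane
          have hd : (a - Finsupp.single (p₀, t₀, j) 1) + Finsupp.single (p₀, t₀, j) 1 = a :=
            tsub_add_cancel_of_le (Finsupp.single_le_iff.2 hq1)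
          rw [mem_Zf]
          apply (key (a - Finsupp.single (p₀, t₀, j) 1)).1
          rw [hd, hs10eq, ← hss]
          exact mem_Zf.1 haZ
        · intro a ha
          rw [Finset.mem_filter]
          constructor
          · rw [mem_Zf, hss, ← hs10eq]
            exact (key a).2 (mem_Zf.1 ha)
          · simp
        · intro a ha
          obtain ⟨haZ, hane⟩ := Finset.mem_filter.1 ha
          exact tsub_add_cancel_of_le (Finsupp.single_le_iff.2 (Nat.one_le_iff_ne_zero.2 hane))
        · intro a ha
          exact add_tsub_cancel_right a _
        · intro a ha
          obtain ⟨haZ, hane⟩ := Finset.mem_filter.1 ha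
          have hq1 : 1 ≤ a (p₀, t₀, j) := Nat.one_le_iff_ne_zero.2 hane
          have hd : (a - Finsupp.single (p₀, t₀, j) 1) + Finsupp.single (p₀, t₀, j) 1 = a :=
            tsub_add_cancel_of_le (Finsupp.single_le_iff.2 hq1)
          have hav : a (p₀, t₀, j)
              = (a - Finsupp.single (p₀, t₀, j) 1 : (ℕ × ℕ × ℕ) →₀ ℕ) (p₀, t₀, j) + 1 := by
            rw [Finsupp.tsub_apply, Finsupp.single_apply, if_pos rfl]
            omega
          have hW := W_add s' p₀ t₀ j (a - Finsupp.single (p₀, t₀, j) 1)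
          calc W s a * (a (p₀, t₀, j) : ℝ)
              = W (s' + Finsupp.single (p₀, t₀) 1)
                  ((a - Finsupp.single (p₀, t₀, j) 1) + Finsupp.single (p₀, t₀, j) 1) *
                  (((a - Finsupp.single (p₀, t₀, j) 1 : (ℕ × ℕ × ℕ) →₀ ℕ) (p₀, t₀, j) : ℝ) + 1) := by
                rw [hd, ← hss, hav]
                push_cast
                ring
            _ = (t₀.choose j : ℝ) * ((s' (p₀, t₀) : ℝ) + 1) *
                  W s' (a - Finsupp.single (p₀, t₀, j) 1) := hW
            _ = (t₀.choose j : ℝ) * (s (p₀, t₀) : ℝ) *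
                  W s' (a - Finsupp.single (p₀, t₀, j) 1) := by
                rw [hsv]; push_cast; ring
      · rw [if_neg hjs]
        refine Finset.sum_eq_zero fun q hq => ?_
        have hq0 : q (p₀, t₀, j) = 0 := by
          by_contra hne
          have := zmem_bound (mem_Zf.1 hq) (p₀, t₀, j) hne
          simp only at this
          nlinarith [Nat.one_le_iff_ne_zero.2 hne]
        rw [hq0]
        simp
    -- Step A
    have hA : (s (p₀, t₀) : ℝ) * (∑ q ∈ Zf s s10, W s q)
        = ∑ j ∈ Finset.range (t₀ + 1), ∑ q ∈ Zf s s10, W s q * (q (p₀, t₀, j) : ℝ) := by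
      rw [Finset.sum_comm, Finset.mul_sum]
      refine Finset.sum_congr rfl fun q hq => ?_
      rw [← Finset.mul_sum]
      have h2 := (mem_Zf.1 hq).2.1 p₀ t₀ hpt₀
      have hc : (∑ j ∈ Finset.range (t₀ + 1), (q (p₀, t₀, j) : ℝ)) = (s (p₀, t₀) : ℝ) := by
        rw [← Nat.cast_sum, h2]
      rw [hc]; ring
    have hs₀R : (s (p₀, t₀) : ℝ) ≠ 0 := Nat.cast_ne_zero.2 (by omega)
    apply mul_left_cancel₀ hs₀R
    rw [hA]
    have hIH : ∀ m, (∑ q' ∈ Zf s' m, W s' q') = (N'.choose m : ℝ) := fun m => ih s' hsupp' hn' m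
    have hstep : ∀ j ∈ Finset.range (t₀ + 1),
        (∑ q ∈ Zf s s10, W s q * (q (p₀, t₀, j) : ℝ))
          = (s (p₀, t₀) : ℝ) *
              (if j ≤ s10 then ((t₀.choose j : ℕ) * (N'.choose (s10 - j) : ℕ) : ℝ) else 0) := by
      intro j hjr
      have hj : j ≤ t₀ := Nat.lt_succ_iff.1 (Finset.mem_range.1 hjr)
      rw [hB j hj]
      split_ifs with hjs
      · rw [hIH (s10 - j)]
        push_cast
        ring
      · ring
    rw [Finset.sum_congr rfl hstep, ← Finset.mul_sum]
    congr 1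
    have hv := vand t₀ N' s10
    rw [hN, add_comm N' t₀, hv]
    rw [Nat.cast_sum]
    refine Finset.sum_congr rfl fun j hj => ?_
    split_ifs with h
    · push_cast; ring
    · simp

theorem statement17 (s : (ℕ × ℕ) →₀ ℕ)
    (hsupp : ∀ p ∈ s.support, 2 ≤ p.1 + p.2)
    (k : ℕ) (hk : 1 ≤ k)
    (hks : (s.sum fun p c => p.2 * c) + 1 = k)
    (s10 : ℕ) (hs10 : s10 + 1 ≤ k) :
    (∑ᶠ q ∈ {q : (ℕ × ℕ × ℕ) →₀ ℕ | Zmem s s10 q},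
        (s.prod fun _ c => (c.factorial : ℝ)) *
          q.prod fun v c => (v.2.1.choose v.2.2 : ℝ) ^ c / (c.factorial : ℝ)) =
      ((k - 1).choose s10 : ℝ) := by
  rw [finsum_mem_eq_finite_toFinset_sum _ (zmem_finite s s10)]
  have hmain := main_ind (s.sum fun _ c => c) s hsupp rfl s10
  have hk1 : k - 1 = s.sum fun p c => p.2 * c := by omega
  rw [hk1]
  exact hmain
end

section
/- For every integer n ≥ 2, the n-th derivative of the implicit function at x₀ equals y^{(n)}(x₀) = Σ_{γ = (s_{p,t}) ∈ B_n} (−1)^{Σ_{p,t} s_{p,t}} · (Σ_{p,t} p·s_{p,t})! · (Σ_{p,t} t·s_{p,t})! / ∏_{p,t} (p!^{s_{p,t}} · t!^{s_{p,t}} · s_{p,t}!) · [∏_{p,t} (f_{x^p y^t}(x₀, y₀))^{s_{p,t}}] / f_y(x₀, y₀)^{Σ_{p,t} s_{p,t}} (the formula of Johnson, in which Σ_{p,t} p·s_{p,t} = n for every γ ∈ B_n). -/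
open Filter Topology

/-- `pd f p r` is the mixed partial derivative `∂^(p+r) f / ∂x^p ∂y^r` of a function
of two real variables. -/
noncomputable def pd (f : ℝ → ℝ → ℝ) (p r : ℕ) : ℝ → ℝ → ℝ :=
  fun x y => iteratedDeriv p (fun x' => iteratedDeriv r (fun y' => f x' y') y) x

/-- `Delta f l g = Σ_{j=0}^{l} (−1)^j C(l,j) g_{x^{l−j} y^j} f_x^j f_y^{l−j}`. -/
noncomputable def Delta (f : ℝ → ℝ → ℝ) (l : ℕ) (g : ℝ → ℝ → ℝ) : ℝ → ℝ → ℝ :=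
  fun x y => ∑ j ∈ Finset.range (l + 1),
    (-1 : ℝ) ^ j * (l.choose j : ℝ) * pd g (l - j) j x y *
      (pd f 1 0 x y) ^ j * (pd f 0 1 x y) ^ (l - j)

/-- Membership in the set `B_n`. -/
def Bmem (n : ℕ) (s : (ℕ × ℕ) →₀ ℕ) : Prop :=
  s (0, 0) = 0 ∧ s (0, 1) = 0 ∧
  (s.sum fun p k => p.1 * k) = n ∧
  (s.sum fun p k => p.2 * k) + 1 = s.sum fun _ k => k

namespace JohnsonAux


def msum (s : (ℕ × ℕ) →₀ ℕ) : ℕ := s.sum fun _ c => c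
def nps (s : (ℕ × ℕ) →₀ ℕ) : ℕ := s.sum fun q c => q.1 * c
def nts (s : (ℕ × ℕ) →₀ ℕ) : ℕ := s.sum fun q c => q.2 * c

lemma Bmem_iff (n : ℕ) (s : (ℕ × ℕ) →₀ ℕ) :
    Bmem n s ↔ s (0, 0) = 0 ∧ s (0, 1) = 0 ∧ nps s = n ∧ nts s + 1 = msum s :=
  Iff.rfl

lemma natsum_add_single (s : (ℕ × ℕ) →₀ ℕ) (q : ℕ × ℕ) (h : (ℕ × ℕ) → ℕ → ℕ)
    (hlin : ∀ a b₁ b₂, h a (b₁ + b₂) = h a b₁ + h a b₂) :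
    (s + Finsupp.single q 1).sum h = s.sum h + h q 1 := by
  have h0 : ∀ a, h a 0 = 0 := by
    intro a; have := hlin a 0 0; simpa using this.symm
  rw [Finsupp.sum_add_index' h0 hlin, Finsupp.sum_single_index (h0 q)]

lemma msum_add_single (s : (ℕ × ℕ) →₀ ℕ) (q : ℕ × ℕ) :
    msum (s + Finsupp.single q 1) = msum s + 1 :=
  natsum_add_single s q _ (fun _ _ _ => rfl)

lemma nps_add_single (s : (ℕ × ℕ) →₀ ℕ) (q : ℕ × ℕ) :
    nps (s + Finsupp.single q 1) = nps s + q.1 := by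
  have := natsum_add_single s q (fun q c => q.1 * c) (fun a b₁ b₂ => Nat.mul_add _ _ _)
  simpa [nps] using this

lemma nts_add_single (s : (ℕ × ℕ) →₀ ℕ) (q : ℕ × ℕ) :
    nts (s + Finsupp.single q 1) = nts s + q.2 := by
  have := natsum_add_single s q (fun q c => q.2 * c) (fun a b₁ b₂ => Nat.mul_add _ _ _)
  simpa [nts] using this

lemma prod_add_single {M : Type*} [CommMonoid M] (s : (ℕ × ℕ) →₀ ℕ) (q : ℕ × ℕ)
    (F : (ℕ × ℕ) → ℕ → M) (H : (ℕ × ℕ) → ℕ → M) (h0 : ∀ r, F r 0 = 1)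
    (hsucc : ∀ r a, F r (a + 1) = F r a * H r a) :
    (s + Finsupp.single q 1).prod F = s.prod F * H q (s q) := by
  have e1 : Finsupp.erase q (s + Finsupp.single q 1) = Finsupp.erase q s := by
    rw [Finsupp.erase_add, Finsupp.erase_single, add_zero]
  have e2 : ((s + Finsupp.single q 1) : (ℕ × ℕ) →₀ ℕ) q = s q + 1 := by
    rw [Finsupp.add_apply, Finsupp.single_eq_same]
  rw [← Finsupp.mul_prod_erase' (s + Finsupp.single q 1) q F h0, e1, e2, hsucc,
    ← Finsupp.mul_prod_erase' s q F h0]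
  exact mul_right_comm _ _ _

lemma apply_le_msum (s : (ℕ × ℕ) →₀ ℕ) (q : ℕ × ℕ) : s q ≤ msum s := by
  by_cases hq : q ∈ s.support
  · exact Finset.single_le_sum (f := fun r => s r) (fun _ _ => Nat.zero_le _) hq
  · simp [Finsupp.notMem_support_iff.mp hq]

lemma supp_ne_of_Bmem {n : ℕ} {s : (ℕ × ℕ) →₀ ℕ} (hs : Bmem n s) {q : ℕ × ℕ}
    (hq : q ∈ s.support) : 1 ≤ q.1 ∨ 2 ≤ q.2 := by
  by_contra hcon
  push_neg at hcon
  obtain ⟨h1, h2⟩ := hcon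
  have hq1 : q.1 = 0 := by omega
  have hq2 : q.2 = 0 ∨ q.2 = 1 := by omega
  have hne := Finsupp.mem_support_iff.mp hq
  rcases hq2 with h | h
  · have : q = (0,0) := Prod.ext hq1 h
    rw [this] at hne; exact hne hs.1
  · have : q = (0,1) := Prod.ext hq1 h
    rw [this] at hne; exact hne hs.2.1

lemma msum_le_of_Bmem {n : ℕ} {s : (ℕ × ℕ) →₀ ℕ} (hs : Bmem n s) : msum s + 1 ≤ 2 * n := by
  have key : 2 * msum s ≤ 2 * nps s + nts s := by
    unfold msum nps nts Finsupp.sum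
    rw [Finset.mul_sum, Finset.mul_sum, ← Finset.sum_add_distrib]
    refine Finset.sum_le_sum fun q hq => ?_
    rcases supp_ne_of_Bmem hs hq with h | h
    · nlinarith [Nat.zero_le (q.2 * s q)]
    · nlinarith [Nat.zero_le (q.1 * s q)]
  have h3 := (Bmem_iff n s).mp hs |>.2.2.1
  have h4 := (Bmem_iff n s).mp hs |>.2.2.2
  omega

lemma one_le_msum_of_Bmem {n : ℕ} {s : (ℕ × ℕ) →₀ ℕ} (hs : Bmem n s) : 1 ≤ msum s := by
  have h4 := (Bmem_iff n s).mp hs |>.2.2.2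
  omega

lemma fst_le_of_Bmem {n : ℕ} {s : (ℕ × ℕ) →₀ ℕ} (hs : Bmem n s) {q : ℕ × ℕ}
    (hq : q ∈ s.support) : q.1 ≤ n := by
  have h1 : q.1 * s q ≤ nps s :=
    Finset.single_le_sum (f := fun r => r.1 * s r) (fun _ _ => Nat.zero_le _) hq
  have h2 : 1 ≤ s q := Nat.one_le_iff_ne_zero.mpr (Finsupp.mem_support_iff.mp hq)
  have h3 := (Bmem_iff n s).mp hs |>.2.2.1
  nlinarith

lemma snd_le_of_Bmem {n : ℕ} {s : (ℕ × ℕ) →₀ ℕ} (hs : Bmem n s) {q : ℕ × ℕ}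
    (hq : q ∈ s.support) : q.2 ≤ 2 * n := by
  have h1 : q.2 * s q ≤ nts s :=
    Finset.single_le_sum (f := fun r => r.2 * s r) (fun _ _ => Nat.zero_le _) hq
  have h2 : 1 ≤ s q := Nat.one_le_iff_ne_zero.mpr (Finsupp.mem_support_iff.mp hq)
  have h3 := (Bmem_iff n s).mp hs |>.2.2.2
  have h4 := msum_le_of_Bmem hs
  nlinarith

/-- the bounding finsupp -/
noncomputable def bnd (n : ℕ) : (ℕ × ℕ) →₀ ℕ :=
  ∑ q ∈ Finset.range (n + 1) ×ˢ Finset.range (2 * n + 1), Finsupp.single q (2 * n)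

lemma bnd_apply (n : ℕ) (q : ℕ × ℕ) (h1 : q.1 ≤ n) (h2 : q.2 ≤ 2 * n) : bnd n q = 2 * n := by
  have hq : q ∈ Finset.range (n + 1) ×ˢ Finset.range (2 * n + 1) := by
    simp only [Finset.mem_product, Finset.mem_range]; omega
  rw [bnd, Finsupp.finset_sum_apply]
  rw [Finset.sum_eq_single q]
  · simp
  · intro b _ hb; exact Finsupp.single_eq_of_ne' hb
  · intro h; exact absurd hq h

lemma le_bnd_of_Bmem {n : ℕ} {s : (ℕ × ℕ) →₀ ℕ} (hs : Bmem n s) : s ≤ bnd n := by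
  intro q
  by_cases hq : q ∈ s.support
  · have h1 := fst_le_of_Bmem hs hq
    have h2 := snd_le_of_Bmem hs hq
    rw [bnd_apply n q h1 h2]
    have h3 := msum_le_of_Bmem hs
    have h4 := apply_le_msum s q
    omega
  · simp [Finsupp.notMem_support_iff.mp hq]

open Classical in
noncomputable def Bfin (n : ℕ) : Finset ((ℕ × ℕ) →₀ ℕ) :=
  (Finset.Iic (bnd n)).filter (fun s => Bmem n s)

lemma mem_Bfin {n : ℕ} {s : (ℕ × ℕ) →₀ ℕ} : s ∈ Bfin n ↔ Bmem n s := by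
  classical
  simp only [Bfin, Finset.mem_filter, Finset.mem_Iic]
  exact ⟨fun h => h.2, fun h => ⟨le_bnd_of_Bmem h, h⟩⟩

lemma setOf_Bmem_eq (n : ℕ) : {s : (ℕ × ℕ) →₀ ℕ | Bmem n s} = ↑(Bfin n) := by
  ext s; simp [mem_Bfin]



/-- `s + single q 1`, as a function-friendly definition. -/
noncomputable def sadd (s : (ℕ × ℕ) →₀ ℕ) (q : ℕ × ℕ) : (ℕ × ℕ) →₀ ℕ := s + Finsupp.single q 1

lemma sadd_apply_self (s : (ℕ × ℕ) →₀ ℕ) (q : ℕ × ℕ) : sadd s q q = s q + 1 := by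
  simp [sadd]

lemma sadd_apply_ne (s : (ℕ × ℕ) →₀ ℕ) {q r : ℕ × ℕ} (h : r ≠ q) : sadd s q r = s r := by
  simp [sadd, Finsupp.single_eq_of_ne' (by exact fun hc => h hc.symm)]

lemma msum_sadd (s : (ℕ × ℕ) →₀ ℕ) (q : ℕ × ℕ) : msum (sadd s q) = msum s + 1 :=
  msum_add_single s q

lemma nps_sadd (s : (ℕ × ℕ) →₀ ℕ) (q : ℕ × ℕ) : nps (sadd s q) = nps s + q.1 :=
  nps_add_single s q

lemma nts_sadd (s : (ℕ × ℕ) →₀ ℕ) (q : ℕ × ℕ) : nts (sadd s q) = nts s + q.2 :=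
  nts_add_single s q

noncomputable def Dfac (s : (ℕ × ℕ) →₀ ℕ) : ℝ :=
  s.prod fun q c => (q.1.factorial : ℝ) ^ c * (q.2.factorial : ℝ) ^ c * (c.factorial : ℝ)

noncomputable def coJ (s : (ℕ × ℕ) →₀ ℕ) : ℝ :=
  ((-1 : ℝ) ^ (msum s) * ((nps s).factorial : ℝ) * ((nts s).factorial : ℝ)) / Dfac s

noncomputable def Pp (u : ℕ × ℕ → ℝ) (s : (ℕ × ℕ) →₀ ℕ) : ℝ :=
  s.prod fun q c => (u q) ^ c

noncomputable def termJ (u : ℕ × ℕ → ℝ) (s : (ℕ × ℕ) →₀ ℕ) : ℝ :=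
  coJ s * Pp u s / (u (0, 1)) ^ (msum s)

lemma Dfac_sadd (s : (ℕ × ℕ) →₀ ℕ) (q : ℕ × ℕ) :
    Dfac (sadd s q)
      = Dfac s * ((q.1.factorial : ℝ) * (q.2.factorial : ℝ) * ((s q : ℝ) + 1)) := by
  refine prod_add_single s q _ (fun r a => (r.1.factorial : ℝ) * (r.2.factorial : ℝ) * ((a : ℝ) + 1)) ?_ ?_
  · intro r; simp
  · intro r a
    rw [pow_succ, pow_succ, Nat.factorial_succ]
    push_cast
    ring

lemma Pp_sadd (u : ℕ × ℕ → ℝ) (s : (ℕ × ℕ) →₀ ℕ) (q : ℕ × ℕ) :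
    Pp u (sadd s q) = Pp u s * u q := by
  refine prod_add_single s q _ (fun r a => u r) ?_ ?_
  · intro r; simp
  · intro r a; rw [pow_succ]

lemma Dfac_pos (s : (ℕ × ℕ) →₀ ℕ) : 0 < Dfac s := by
  refine Finset.prod_pos fun q hq => ?_
  positivity

lemma Dfac_ne_zero (s : (ℕ × ℕ) →₀ ℕ) : Dfac s ≠ 0 := (Dfac_pos s).ne'

/-- Edge lemma A : moving one `x`-derivative onto a factor. -/
lemma edgeA (u : ℕ × ℕ → ℝ) (hw : u (0, 1) ≠ 0) (n : ℕ) (s₀ : (ℕ × ℕ) →₀ ℕ) (q : ℕ × ℕ)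
    (hn : nps (sadd s₀ q) = n) :
    coJ (sadd s₀ q) * ((sadd s₀ q q : ℕ) : ℝ) * Pp u s₀
        * u (q.1 + 1, q.2) / (u (0, 1)) ^ (msum (sadd s₀ q))
      = (((q.1 + 1) * (sadd s₀ (q.1 + 1, q.2) (q.1 + 1, q.2)) : ℕ) : ℝ) / ((n : ℝ) + 1)
        * termJ u (sadd s₀ (q.1 + 1, q.2)) := by
  have hn' : nps s₀ + q.1 = n := by rw [nps_sadd] at hn; exact hn
  rw [termJ, coJ, coJ, sadd_apply_self, sadd_apply_self, Dfac_sadd, Dfac_sadd,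
    msum_sadd, msum_sadd, nps_sadd, nps_sadd,
    nts_sadd, nts_sadd, Pp_sadd]
  simp only
  rw [← hn']
  rw [show nps s₀ + (q.1 + 1) = (nps s₀ + q.1) + 1 by omega, Nat.factorial_succ,
    Nat.factorial_succ q.1]
  have hD := Dfac_ne_zero s₀
  have hf1 : ((q.1.factorial : ℝ)) ≠ 0 := Nat.cast_ne_zero.mpr (Nat.factorial_ne_zero _)
  have hf2 : ((q.2.factorial : ℝ)) ≠ 0 := Nat.cast_ne_zero.mpr (Nat.factorial_ne_zero _)
  have hc1 : ((s₀ q : ℝ) + 1) ≠ 0 := by positivity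
  have hc2 : ((s₀ (q.1+1,q.2) : ℝ) + 1) ≠ 0 := by positivity
  have hnn : ((nps s₀ + q.1 : ℕ) : ℝ) + 1 ≠ 0 := by positivity
  have hwp : (u (0,1)) ^ (msum s₀ + 1) ≠ 0 := pow_ne_zero _ hw
  push_cast
  field_simp

/-- Edge lemma B : moving one `y`-derivative onto a factor (with `y' = -u₁₀/u₀₁`). -/
lemma edgeB (u : ℕ × ℕ → ℝ) (hw : u (0, 1) ≠ 0) (n : ℕ) (s₀ : (ℕ × ℕ) →₀ ℕ) (q : ℕ × ℕ)
    (hn : nps (sadd s₀ q) = n) :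
    -(coJ (sadd s₀ q) * ((sadd s₀ q q : ℕ) : ℝ) * Pp u s₀
        * u (q.1, q.2 + 1) * u (1, 0)) / (u (0, 1)) ^ (msum (sadd s₀ q) + 1)
      = (((q.2 + 1) * (sadd (sadd s₀ (q.1, q.2 + 1)) (1, 0) (q.1, q.2 + 1))
            * (sadd (sadd s₀ (q.1, q.2 + 1)) (1, 0) (1, 0)) : ℕ) : ℝ)
          / (((n : ℝ) + 1) * ((nts (sadd (sadd s₀ (q.1, q.2 + 1)) (1, 0)) : ℕ) : ℝ))
        * termJ u (sadd (sadd s₀ (q.1, q.2 + 1)) (1, 0)) := by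
  have hne1 : ((1, 0) : ℕ × ℕ) ≠ (q.1, q.2 + 1) := by
    intro h; rw [Prod.ext_iff] at h; omega
  have hne2 : ((q.1, q.2 + 1) : ℕ × ℕ) ≠ (1, 0) := fun h => hne1 h.symm
  have hn' : nps s₀ + q.1 = n := by rw [nps_sadd] at hn; exact hn
  rw [termJ, coJ, coJ, sadd_apply_self, sadd_apply_ne _ hne2, sadd_apply_self,
    sadd_apply_self, Dfac_sadd, Dfac_sadd, Dfac_sadd,
    msum_sadd, msum_sadd, msum_sadd, nps_sadd, nps_sadd, nps_sadd,
    nts_sadd, nts_sadd, nts_sadd, Pp_sadd, Pp_sadd, sadd_apply_ne _ hne1]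
  simp only
  rw [← hn']
  rw [show nps s₀ + q.1 + 1 + 0 = (nps s₀ + q.1) + 1 by omega, Nat.factorial_succ,
    show nts s₀ + (q.2 + 1) + 0 = (nts s₀ + q.2) + 1 by omega, Nat.factorial_succ,
    Nat.factorial_succ q.2]
  have hD := Dfac_ne_zero s₀
  have hf1 : ((q.1.factorial : ℝ)) ≠ 0 := Nat.cast_ne_zero.mpr (Nat.factorial_ne_zero _)
  have hf2 : ((q.2.factorial : ℝ)) ≠ 0 := Nat.cast_ne_zero.mpr (Nat.factorial_ne_zero _)
  have hc1 : ((s₀ q : ℝ) + 1) ≠ 0 := by positivity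
  have hc2 : ((s₀ (q.1, q.2 + 1) : ℝ) + 1) ≠ 0 := by positivity
  have hc3 : ((s₀ (1, 0) : ℝ) + 1) ≠ 0 := by positivity
  have hnn : ((nps s₀ + q.1 : ℕ) : ℝ) + 1 ≠ 0 := by positivity
  have hts : ((nts s₀ + q.2 : ℕ) : ℝ) + 1 ≠ 0 := by positivity
  have hwp : (u (0,1)) ^ (msum s₀ + 1 + 1) ≠ 0 := pow_ne_zero _ hw
  push_cast
  field_simp
  ring

/-- Edge lemma C : the `u₁₁` term coming from the denominator. -/
lemma edgeC (u : ℕ × ℕ → ℝ) (hw : u (0, 1) ≠ 0) (n : ℕ) (s : (ℕ × ℕ) →₀ ℕ)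
    (hn : nps s = n) (hm : nts s + 1 = msum s) :
    -(coJ s * ((msum s : ℕ) : ℝ) * Pp u s * u (1, 1)) / (u (0, 1)) ^ (msum s + 1)
      = ((sadd s (1, 1) (1, 1) : ℕ) : ℝ) / ((n : ℝ) + 1) * termJ u (sadd s (1, 1)) := by
  rw [termJ, coJ, coJ, sadd_apply_self, Dfac_sadd,
    msum_sadd, nps_sadd, nts_sadd, Pp_sadd]
  simp only
  rw [← hn, ← hm]
  rw [show nps s + 1 = nps s + 1 from rfl, Nat.factorial_succ,
    show nts s + 1 = nts s + 1 from rfl, Nat.factorial_succ (nts s)]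
  have hD := Dfac_ne_zero s
  have hc1 : ((s (1, 1) : ℝ) + 1) ≠ 0 := by positivity
  have hnn : ((nps s : ℕ) : ℝ) + 1 ≠ 0 := by positivity
  have hwp : (u (0,1)) ^ (nts s + 1 + 1) ≠ 0 := pow_ne_zero _ hw
  push_cast
  field_simp
  ring

/-- Edge lemma D : the `u₀₂ u₁₀` term coming from the denominator. -/
lemma edgeD (u : ℕ × ℕ → ℝ) (hw : u (0, 1) ≠ 0) (n : ℕ) (s : (ℕ × ℕ) →₀ ℕ)
    (hn : nps s = n) (hm : nts s + 1 = msum s) :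
    coJ s * ((msum s : ℕ) : ℝ) * Pp u s * u (0, 2) * u (1, 0) / (u (0, 1)) ^ (msum s + 2)
      = ((2 * (sadd (sadd s (0, 2)) (1, 0) (0, 2))
            * (sadd (sadd s (0, 2)) (1, 0) (1, 0)) : ℕ) : ℝ)
          / (((n : ℝ) + 1) * ((nts (sadd (sadd s (0, 2)) (1, 0)) : ℕ) : ℝ))
        * termJ u (sadd (sadd s (0, 2)) (1, 0)) := by
  have hne1 : ((1, 0) : ℕ × ℕ) ≠ (0, 2) := by
    intro h; rw [Prod.ext_iff] at h; omega
  have hne2 : ((0, 2) : ℕ × ℕ) ≠ (1, 0) := fun h => hne1 h.symm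
  rw [termJ, coJ, coJ, sadd_apply_ne _ hne2, sadd_apply_self, sadd_apply_self,
    Dfac_sadd, Dfac_sadd, msum_sadd, msum_sadd, nps_sadd, nps_sadd,
    nts_sadd, nts_sadd, Pp_sadd, Pp_sadd, sadd_apply_ne _ hne1]
  simp only
  rw [← hn, ← hm]
  rw [show nps s + 0 + 1 = nps s + 1 by omega, Nat.factorial_succ,
    show nts s + 2 + 0 = (nts s + 1) + 1 by omega, Nat.factorial_succ,
    Nat.factorial_succ (nts s)]
  have hD := Dfac_ne_zero s
  have hc1 : ((s (0, 2) : ℝ) + 1) ≠ 0 := by positivity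
  have hc2 : ((s (1, 0) : ℝ) + 1) ≠ 0 := by positivity
  have hnn : ((nps s : ℕ) : ℝ) + 1 ≠ 0 := by positivity
  have hts : ((nts s : ℝ) + 2) ≠ 0 := by positivity
  have hwp : (u (0,1)) ^ (nts s + 1 + 2) ≠ 0 := pow_ne_zero _ hw
  push_cast
  field_simp
  ring

end JohnsonAux


namespace JohnsonAux

lemma W1 (s : (ℕ × ℕ) →₀ ℕ) :
    ∑ q ∈ s.support.filter (fun q => 1 ≤ q.1 ∧ q ≠ (1,0) ∧ q ≠ (1,1)), q.1 * s q
      + (s (1,0) + s (1,1)) = nps s := by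
  classical
  have hsplit := Finset.sum_filter_add_sum_filter_not s.support
    (fun q => 1 ≤ q.1 ∧ q ≠ (1,0) ∧ q ≠ (1,1)) (fun q => q.1 * s q)
  have hcomp : ∑ q ∈ s.support.filter (fun q => ¬(1 ≤ q.1 ∧ q ≠ (1,0) ∧ q ≠ (1,1))),
      q.1 * s q = s (1,0) + s (1,1) := by
    have hstep : ∀ q ∈ s.support.filter (fun q => ¬(1 ≤ q.1 ∧ q ≠ (1,0) ∧ q ≠ (1,1))),
        q.1 * s q = (if q = (1,0) then s (1,0) else 0) + (if q = (1,1) then s (1,1) else 0) := by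
      intro q hq
      rw [Finset.mem_filter] at hq
      by_cases h1 : q = (1,0)
      · subst h1
        rw [if_pos rfl, if_neg (by decide)]
        show 1 * s (1,0) = s (1,0) + 0
        omega
      · by_cases h2 : q = (1,1)
        · subst h2
          rw [if_neg (by decide), if_pos rfl]
          show 1 * s (1,1) = 0 + s (1,1)
          omega
        · have hz : ¬ 1 ≤ q.1 := by tauto
          have hz' : q.1 = 0 := by omega
          rw [if_neg h1, if_neg h2, hz', zero_mul, add_zero]
    rw [Finset.sum_congr rfl hstep, Finset.sum_add_distrib,
      Finset.sum_ite_eq' _ ((1,0) : ℕ × ℕ), Finset.sum_ite_eq' _ ((1,1) : ℕ × ℕ)]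
    have m1 : (((1,0) : ℕ × ℕ) ∈ s.support.filter
        (fun q => ¬(1 ≤ q.1 ∧ q ≠ (1,0) ∧ q ≠ (1,1)))) ↔ ((1,0) : ℕ × ℕ) ∈ s.support := by
      simp
    have m2 : (((1,1) : ℕ × ℕ) ∈ s.support.filter
        (fun q => ¬(1 ≤ q.1 ∧ q ≠ (1,0) ∧ q ≠ (1,1)))) ↔ ((1,1) : ℕ × ℕ) ∈ s.support := by
      simp
    have v1 : (if (((1,0) : ℕ × ℕ) ∈ s.support.filter
        (fun q => ¬(1 ≤ q.1 ∧ q ≠ (1,0) ∧ q ≠ (1,1)))) then s (1,0) else 0) = s (1,0) := by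
      by_cases h : ((1,0) : ℕ × ℕ) ∈ s.support
      · rw [if_pos (m1.mpr h)]
      · rw [if_neg (fun hc => h (m1.mp hc)), Finsupp.notMem_support_iff.mp h]
    have v2 : (if (((1,1) : ℕ × ℕ) ∈ s.support.filter
        (fun q => ¬(1 ≤ q.1 ∧ q ≠ (1,0) ∧ q ≠ (1,1)))) then s (1,1) else 0) = s (1,1) := by
      by_cases h : ((1,1) : ℕ × ℕ) ∈ s.support
      · rw [if_pos (m2.mpr h)]
      · rw [if_neg (fun hc => h (m2.mp hc)), Finsupp.notMem_support_iff.mp h]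
    rw [v1, v2]
  have htot : ∑ q ∈ s.support, q.1 * s q = nps s := rfl
  omega

lemma W2 (s : (ℕ × ℕ) →₀ ℕ) :
    ∑ q ∈ s.support.filter (fun q => 1 ≤ q.2 ∧ q ≠ (0,1) ∧ q ≠ (0,2)), q.2 * s q
      + (s (0,1) + 2 * s (0,2)) = nts s := by
  classical
  have hsplit := Finset.sum_filter_add_sum_filter_not s.support
    (fun q => 1 ≤ q.2 ∧ q ≠ (0,1) ∧ q ≠ (0,2)) (fun q => q.2 * s q)
  have hcomp : ∑ q ∈ s.support.filter (fun q => ¬(1 ≤ q.2 ∧ q ≠ (0,1) ∧ q ≠ (0,2))),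
      q.2 * s q = s (0,1) + 2 * s (0,2) := by
    have hstep : ∀ q ∈ s.support.filter (fun q => ¬(1 ≤ q.2 ∧ q ≠ (0,1) ∧ q ≠ (0,2))),
        q.2 * s q = (if q = (0,1) then s (0,1) else 0)
          + (if q = (0,2) then 2 * s (0,2) else 0) := by
      intro q hq
      rw [Finset.mem_filter] at hq
      by_cases h1 : q = (0,1)
      · subst h1
        rw [if_pos rfl, if_neg (by decide)]
        show 1 * s (0,1) = s (0,1) + 0
        omega
      · by_cases h2 : q = (0,2)
        · subst h2
          rw [if_neg (by decide), if_pos rfl]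
          show 2 * s (0,2) = 0 + 2 * s (0,2)
          omega
        · have hz : ¬ 1 ≤ q.2 := by tauto
          have hz' : q.2 = 0 := by omega
          rw [if_neg h1, if_neg h2, hz', zero_mul, add_zero]
    rw [Finset.sum_congr rfl hstep, Finset.sum_add_distrib,
      Finset.sum_ite_eq' _ ((0,1) : ℕ × ℕ), Finset.sum_ite_eq' _ ((0,2) : ℕ × ℕ)]
    have m1 : (((0,1) : ℕ × ℕ) ∈ s.support.filter
        (fun q => ¬(1 ≤ q.2 ∧ q ≠ (0,1) ∧ q ≠ (0,2)))) ↔ ((0,1) : ℕ × ℕ) ∈ s.support := by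
      simp
    have m2 : (((0,2) : ℕ × ℕ) ∈ s.support.filter
        (fun q => ¬(1 ≤ q.2 ∧ q ≠ (0,1) ∧ q ≠ (0,2)))) ↔ ((0,2) : ℕ × ℕ) ∈ s.support := by
      simp
    have v1 : (if (((0,1) : ℕ × ℕ) ∈ s.support.filter
        (fun q => ¬(1 ≤ q.2 ∧ q ≠ (0,1) ∧ q ≠ (0,2)))) then s (0,1) else 0) = s (0,1) := by
      by_cases h : ((0,1) : ℕ × ℕ) ∈ s.support
      · rw [if_pos (m1.mpr h)]
      · rw [if_neg (fun hc => h (m1.mp hc)), Finsupp.notMem_support_iff.mp h]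
    have v2 : (if (((0,2) : ℕ × ℕ) ∈ s.support.filter
        (fun q => ¬(1 ≤ q.2 ∧ q ≠ (0,1) ∧ q ≠ (0,2)))) then 2 * s (0,2) else 0)
        = 2 * s (0,2) := by
      by_cases h : ((0,2) : ℕ × ℕ) ∈ s.support
      · rw [if_pos (m2.mpr h)]
      · rw [if_neg (fun hc => h (m2.mp hc)), Finsupp.notMem_support_iff.mp h, mul_zero]
    rw [v1, v2]
  have htot : ∑ q ∈ s.support, q.2 * s q = nts s := rfl
  omega

lemma nts_pos_of_Bmem {n : ℕ} {s : (ℕ × ℕ) →₀ ℕ} (hs : Bmem (n + 1) s) (hn : 1 ≤ n)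
    (h10 : 1 ≤ s (1,0)) : 1 ≤ nts s := by
  by_contra hT
  have hT0 : nts s = 0 := by omega
  have hm1 : msum s = 1 := by
    have := (Bmem_iff _ s).mp hs |>.2.2.2
    omega
  have hsupp : s.support ⊆ {((1,0) : ℕ × ℕ)} := by
    intro q hq
    rw [Finset.mem_singleton]
    by_contra hne
    have hq1 : 1 ≤ s q := Nat.one_le_iff_ne_zero.mpr (Finsupp.mem_support_iff.mp hq)
    have h10s : ((1,0) : ℕ × ℕ) ∈ s.support := Finsupp.mem_support_iff.mpr (by omega)
    have hpair : ({((1,0) : ℕ × ℕ), q} : Finset (ℕ × ℕ)) ⊆ s.support := by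
      intro r hr
      rcases Finset.mem_insert.mp hr with h | h
      · subst h; exact h10s
      · rw [Finset.mem_singleton] at h; subst h; exact hq
    have hsum : s (1,0) + s q ≤ msum s := by
      have := Finset.sum_le_sum_of_subset_of_nonneg hpair
        (fun r _ _ => Nat.zero_le (s r))
      rwa [Finset.sum_pair (fun h => hne h.symm)] at this
    omega
  have hss : s = Finsupp.single (1,0) (s (1,0)) :=
    Finsupp.support_subset_singleton.mp hsupp
  have hnps : nps s = s (1,0) := by
    conv_lhs => rw [hss, nps]
    rw [Finsupp.sum_single_index (by simp)]
    simp
  have hmsum : msum s = s (1,0) := by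
    conv_lhs => rw [hss, msum]
    rw [Finsupp.sum_single_index (by simp)]
  have := (Bmem_iff _ s).mp hs |>.2.2.1
  omega

/-- The per-target weight identity. -/
lemma weight_id (n : ℕ) (hn : 1 ≤ n) (s : (ℕ × ℕ) →₀ ℕ) (hs : Bmem (n + 1) s) :
    (∑ q ∈ s.support.filter (fun q => 1 ≤ q.1 ∧ q ≠ (1,0) ∧ q ≠ (1,1)),
        ((q.1 * s q : ℕ) : ℝ) / ((n : ℝ) + 1))
      + (∑ q ∈ s.support.filter (fun q => 1 ≤ q.2 ∧ q ≠ (0,1) ∧ q ≠ (0,2) ∧ 1 ≤ s (1,0)),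
          ((q.2 * s q * s (1,0) : ℕ) : ℝ) / (((n : ℝ) + 1) * ((nts s : ℕ) : ℝ)))
      + ((s (1,1) : ℕ) : ℝ) / ((n : ℝ) + 1)
      + ((2 * s (0,2) * s (1,0) : ℕ) : ℝ) / (((n : ℝ) + 1) * ((nts s : ℕ) : ℝ)) = 1 := by
  classical
  have hnps : nps s = n + 1 := (Bmem_iff _ s).mp hs |>.2.2.1
  have h01 : s (0,1) = 0 := (Bmem_iff _ s).mp hs |>.2.1
  have hW1 := W1 s
  have hn1 : ((n : ℝ) + 1) ≠ 0 := by positivity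
  by_cases h10 : 1 ≤ s (1,0)
  · -- main case
    have hT := nts_pos_of_Bmem hs hn h10
    have hTne : ((nts s : ℕ) : ℝ) ≠ 0 := by
      simp only [ne_eq, Nat.cast_eq_zero]; omega
    have hW2 := W2 s
    have hfilter : s.support.filter (fun q => 1 ≤ q.2 ∧ q ≠ (0,1) ∧ q ≠ (0,2) ∧ 1 ≤ s (1,0))
        = s.support.filter (fun q => 1 ≤ q.2 ∧ q ≠ (0,1) ∧ q ≠ (0,2)) := by
      apply Finset.filter_congr
      intro q _
      constructor
      · rintro ⟨a, b, c, -⟩; exact ⟨a, b, c⟩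
      · rintro ⟨a, b, c⟩; exact ⟨a, b, c, h10⟩
    rw [hfilter]
    rw [← Finset.sum_div, ← Finset.sum_div, ← Nat.cast_sum, ← Nat.cast_sum]
    set A := ∑ q ∈ s.support.filter (fun q => 1 ≤ q.1 ∧ q ≠ (1,0) ∧ q ≠ (1,1)), q.1 * s q with hA
    have hBs : ∑ q ∈ s.support.filter (fun q => 1 ≤ q.2 ∧ q ≠ (0,1) ∧ q ≠ (0,2)),
        q.2 * s q * s (1,0)
        = (∑ q ∈ s.support.filter (fun q => 1 ≤ q.2 ∧ q ≠ (0,1) ∧ q ≠ (0,2)), q.2 * s q)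
          * s (1,0) := by
      rw [Finset.sum_mul]
    rw [hBs]
    set B := ∑ q ∈ s.support.filter (fun q => 1 ≤ q.2 ∧ q ≠ (0,1) ∧ q ≠ (0,2)), q.2 * s q with hB
    have e1 : (A : ℝ) + (s (1,0) : ℝ) + (s (1,1) : ℝ) = (n : ℝ) + 1 := by
      have h' : A + s (1,0) + s (1,1) = n + 1 := by
        have : A + (s (1,0) + s (1,1)) = n + 1 := by rw [hW1, hnps]
        omega
      exact_mod_cast h'
    have e2 : (B : ℝ) + 2 * (s (0,2) : ℝ) = ((nts s : ℕ) : ℝ) := by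
      have h' : B + 2 * s (0,2) = nts s := by
        have : B + (s (0,1) + 2 * s (0,2)) = nts s := hW2
        omega
      exact_mod_cast h'
    push_cast
    push_cast at e1 e2
    have key : (A : ℝ) * ((nts s : ℕ) : ℝ) + (B : ℝ) * (s (1,0) : ℝ)
        + (s (1,1) : ℝ) * ((nts s : ℕ) : ℝ)
        + 2 * (s (0,2) : ℝ) * (s (1,0) : ℝ) = ((n : ℝ) + 1) * ((nts s : ℕ) : ℝ) := by
      linear_combination ((nts s : ℕ) : ℝ) * e1 + (s (1,0) : ℝ) * e2
    have expand : (A : ℝ) / ((n : ℝ) + 1)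
        + (B : ℝ) * (s (1,0) : ℝ) / (((n : ℝ) + 1) * ((nts s : ℕ) : ℝ))
        + (s (1,1) : ℝ) / ((n : ℝ) + 1)
        + 2 * (s (0,2) : ℝ) * (s (1,0) : ℝ) / (((n : ℝ) + 1) * ((nts s : ℕ) : ℝ))
        = ((A : ℝ) * ((nts s : ℕ) : ℝ) + (B : ℝ) * (s (1,0) : ℝ)
            + (s (1,1) : ℝ) * ((nts s : ℕ) : ℝ)
            + 2 * (s (0,2) : ℝ) * (s (1,0) : ℝ)) / (((n : ℝ) + 1) * ((nts s : ℕ) : ℝ)) := by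
      field_simp
    rw [expand, key, div_self (mul_ne_zero hn1 hTne)]
  · -- s (1,0) = 0
    have h100 : s (1,0) = 0 := by omega
    have hfilter : s.support.filter (fun q => 1 ≤ q.2 ∧ q ≠ (0,1) ∧ q ≠ (0,2) ∧ 1 ≤ s (1,0))
        = ∅ := by
      apply Finset.filter_false_of_mem
      intro q _
      rintro ⟨-, -, -, h⟩
      omega
    rw [hfilter, Finset.sum_empty, h100]
    rw [← Finset.sum_div, ← Nat.cast_sum]
    set A := ∑ q ∈ s.support.filter (fun q => 1 ≤ q.1 ∧ q ≠ (1,0) ∧ q ≠ (1,1)), q.1 * s q with hA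
    have e1 : (A : ℝ) + (s (1,1) : ℝ) = (n : ℝ) + 1 := by
      have h' : A + s (1,1) = n + 1 := by
        have : A + (s (1,0) + s (1,1)) = n + 1 := by rw [hW1, hnps]
        omega
      exact_mod_cast h'
    push_cast
    push_cast at e1
    rw [mul_zero, zero_div]
    have expand : (A : ℝ) / ((n : ℝ) + 1) + 0 + (s (1,1) : ℝ) / ((n : ℝ) + 1) + 0
        = ((A : ℝ) + (s (1,1) : ℝ)) / ((n : ℝ) + 1) := by
      field_simp
      ring
    rw [expand, e1, div_self hn1]


noncomputable def ssub (s : (ℕ × ℕ) →₀ ℕ) (q : ℕ × ℕ) : (ℕ × ℕ) →₀ ℕ :=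
  s - Finsupp.single q 1

lemma one_le_of_mem {s : (ℕ × ℕ) →₀ ℕ} {q : ℕ × ℕ} (h : q ∈ s.support) : 1 ≤ s q :=
  Nat.one_le_iff_ne_zero.mpr (Finsupp.mem_support_iff.mp h)

lemma ssub_apply_self (s : (ℕ × ℕ) →₀ ℕ) (q : ℕ × ℕ) : ssub s q q = s q - 1 := by
  simp [ssub, Finsupp.tsub_apply]

lemma ssub_apply_ne (s : (ℕ × ℕ) →₀ ℕ) {q r : ℕ × ℕ} (h : r ≠ q) : ssub s q r = s r := by
  simp [ssub, Finsupp.tsub_apply, Finsupp.single_eq_of_ne' (fun hc => h hc.symm)]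

lemma sadd_ssub {s : (ℕ × ℕ) →₀ ℕ} {q : ℕ × ℕ} (h : 1 ≤ s q) : sadd (ssub s q) q = s := by
  ext r
  by_cases hr : r = q
  · subst hr
    rw [sadd_apply_self, ssub_apply_self]
    omega
  · rw [sadd_apply_ne _ hr, ssub_apply_ne _ hr]

lemma ssub_sadd (s : (ℕ × ℕ) →₀ ℕ) (q : ℕ × ℕ) : ssub (sadd s q) q = s := by
  ext r
  by_cases hr : r = q
  · subst hr
    rw [ssub_apply_self, sadd_apply_self]
    omega
  · rw [ssub_apply_ne _ hr, sadd_apply_ne _ hr]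

lemma mem_support_sadd_self (s : (ℕ × ℕ) →₀ ℕ) (q : ℕ × ℕ) : q ∈ (sadd s q).support := by
  rw [Finsupp.mem_support_iff, sadd_apply_self]
  omega

/-- reindexing for the `C` edges -/
lemma sumC (u : ℕ × ℕ → ℝ) (hw : u (0, 1) ≠ 0) (n : ℕ) :
    ∑ s ∈ Bfin n,
        -(coJ s * ((msum s : ℕ) : ℝ) * Pp u s * u (1, 1)) / (u (0, 1)) ^ (msum s + 1)
      = ∑ s' ∈ (Bfin (n + 1)).filter (fun s' => 1 ≤ s' (1, 1)),
          ((s' (1, 1) : ℕ) : ℝ) / ((n : ℝ) + 1) * termJ u s' := by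
  classical
  refine Finset.sum_bij' (fun s _ => sadd s (1, 1)) (fun s' _ => ssub s' (1, 1)) ?_ ?_ ?_ ?_ ?_
  · intro s hs
    rw [mem_Bfin] at hs
    obtain ⟨h00, h01, hnps, hmm⟩ := hs
    rw [Finset.mem_filter, mem_Bfin]
    have e1 : sadd s (1, 1) (0, 0) = s (0, 0) := sadd_apply_ne _ (by decide)
    have e2 : sadd s (1, 1) (0, 1) = s (0, 1) := sadd_apply_ne _ (by decide)
    refine ⟨⟨?_, ?_, ?_, ?_⟩, ?_⟩
    · rw [e1]; exact h00
    · rw [e2]; exact h01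
    · show nps (sadd s (1, 1)) = n + 1
      have hnps' : nps s = n := hnps
      have : nps (sadd s (1, 1)) = nps s + 1 := nps_sadd s (1, 1)
      rw [this]; omega
    · show nts (sadd s (1, 1)) + 1 = msum (sadd s (1, 1))
      have e3 : nts (sadd s (1, 1)) = nts s + 1 := nts_sadd s (1, 1)
      have e4 : msum (sadd s (1, 1)) = msum s + 1 := msum_sadd s (1, 1)
      rw [e3, e4]
      change nts s + 1 = msum s at hmm
      omega
    · rw [sadd_apply_self]; omega
  · intro s' hs'
    rw [Finset.mem_filter, mem_Bfin] at hs'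
    obtain ⟨⟨h00, h01, hnps, hmm⟩, h11⟩ := hs'
    rw [mem_Bfin]
    have hdec : sadd (ssub s' (1, 1)) (1, 1) = s' := sadd_ssub h11
    have d1 : nps s' = nps (ssub s' (1, 1)) + 1 := by
      conv_lhs => rw [← hdec]
      exact nps_sadd _ _
    have d2 : nts s' = nts (ssub s' (1, 1)) + 1 := by
      conv_lhs => rw [← hdec]
      exact nts_sadd _ _
    have d3 : msum s' = msum (ssub s' (1, 1)) + 1 := by
      conv_lhs => rw [← hdec]
      exact msum_sadd _ _
    refine ⟨?_, ?_, ?_, ?_⟩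
    · rw [ssub_apply_ne _ (by decide)]; exact h00
    · rw [ssub_apply_ne _ (by decide)]; exact h01
    · show nps (ssub s' (1, 1)) = n
      change nps s' = n + 1 at hnps
      omega
    · show nts (ssub s' (1, 1)) + 1 = msum (ssub s' (1, 1))
      change nts s' + 1 = msum s' at hmm
      omega
  · intro s _
    exact ssub_sadd s (1, 1)
  · intro s' hs'
    rw [Finset.mem_filter] at hs'
    exact sadd_ssub hs'.2
  · intro s hs
    rw [mem_Bfin] at hs
    have := edgeC u hw n s hs.2.2.1 hs.2.2.2
    rw [sadd_apply_self] at this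
    rw [this, sadd_apply_self]

/-- reindexing for the `D` edges -/
lemma sumD (u : ℕ × ℕ → ℝ) (hw : u (0, 1) ≠ 0) (n : ℕ) :
    ∑ s ∈ Bfin n,
        coJ s * ((msum s : ℕ) : ℝ) * Pp u s * u (0, 2) * u (1, 0) / (u (0, 1)) ^ (msum s + 2)
      = ∑ s' ∈ (Bfin (n + 1)).filter (fun s' => 1 ≤ s' (0, 2) ∧ 1 ≤ s' (1, 0)),
          ((2 * s' (0, 2) * s' (1, 0) : ℕ) : ℝ)
            / (((n : ℝ) + 1) * ((nts s' : ℕ) : ℝ)) * termJ u s' := by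
  classical
  refine Finset.sum_bij' (fun s _ => sadd (sadd s (0, 2)) (1, 0))
    (fun s' _ => ssub (ssub s' (1, 0)) (0, 2)) ?_ ?_ ?_ ?_ ?_
  · intro s hs
    rw [mem_Bfin] at hs
    obtain ⟨h00, h01, hnps, hmm⟩ := hs
    rw [Finset.mem_filter, mem_Bfin]
    have e1 : sadd (sadd s (0, 2)) (1, 0) (0, 0)
        = s (0, 0) := by rw [sadd_apply_ne _ (by decide), sadd_apply_ne _ (by decide)]
    have e2 : sadd (sadd s (0, 2)) (1, 0) (0, 1)
        = s (0, 1) := by rw [sadd_apply_ne _ (by decide), sadd_apply_ne _ (by decide)]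
    refine ⟨⟨?_, ?_, ?_, ?_⟩, ?_, ?_⟩
    · rw [e1]; exact h00
    · rw [e2]; exact h01
    · show nps (sadd (sadd s (0, 2)) (1, 0)) = n + 1
      have hnps' : nps s = n := hnps
      have : nps (sadd (sadd s (0, 2)) (1, 0)) = nps s + 0 + 1 := by
        rw [nps_sadd, nps_sadd]
      rw [this]; omega
    · show nts (sadd (sadd s (0, 2)) (1, 0)) + 1 = msum (sadd (sadd s (0, 2)) (1, 0))
      have e3 : nts (sadd (sadd s (0, 2)) (1, 0)) = nts s + 2 + 0 := by
        rw [nts_sadd, nts_sadd]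
      have e4 : msum (sadd (sadd s (0, 2)) (1, 0)) = msum s + 1 + 1 := by
        rw [msum_sadd, msum_sadd]
      rw [e3, e4]
      change nts s + 1 = msum s at hmm
      omega
    · rw [sadd_apply_ne _ (by decide), sadd_apply_self]; omega
    · rw [sadd_apply_self]; omega
  · intro s' hs'
    rw [Finset.mem_filter, mem_Bfin] at hs'
    obtain ⟨⟨h00, h01, hnps, hmm⟩, h02, h10⟩ := hs'
    rw [mem_Bfin]
    have h02' : 1 ≤ (ssub s' (1, 0)) (0, 2) := by
      rw [ssub_apply_ne _ (by decide)]; exact h02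
    have hdec : sadd (sadd (ssub (ssub s' (1, 0)) (0, 2)) (0, 2)) (1, 0) = s' := by
      rw [sadd_ssub h02', sadd_ssub h10]
    have d1 : nps s' = nps (ssub (ssub s' (1, 0)) (0, 2)) + 0 + 1 := by
      conv_lhs => rw [← hdec]
      rw [nps_sadd, nps_sadd]
    have d2 : nts s' = nts (ssub (ssub s' (1, 0)) (0, 2)) + 2 + 0 := by
      conv_lhs => rw [← hdec]
      rw [nts_sadd, nts_sadd]
    have d3 : msum s' = msum (ssub (ssub s' (1, 0)) (0, 2)) + 1 + 1 := by
      conv_lhs => rw [← hdec]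
      rw [msum_sadd, msum_sadd]
    refine ⟨?_, ?_, ?_, ?_⟩
    · rw [ssub_apply_ne _ (by decide), ssub_apply_ne _ (by decide)]; exact h00
    · rw [ssub_apply_ne _ (by decide), ssub_apply_ne _ (by decide)]; exact h01
    · show nps (ssub (ssub s' (1, 0)) (0, 2)) = n
      change nps s' = n + 1 at hnps
      omega
    · show nts (ssub (ssub s' (1, 0)) (0, 2)) + 1 = msum (ssub (ssub s' (1, 0)) (0, 2))
      change nts s' + 1 = msum s' at hmm
      omega
  · intro s _
    show ssub (ssub (sadd (sadd s (0, 2)) (1, 0)) (1, 0)) (0, 2) = s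
    rw [ssub_sadd, ssub_sadd]
  · intro s' hs'
    rw [Finset.mem_filter] at hs'
    obtain ⟨-, h02, h10⟩ := hs'
    have h02' : 1 ≤ (ssub s' (1, 0)) (0, 2) := by
      rw [ssub_apply_ne _ (by decide)]; exact h02
    show sadd (sadd (ssub (ssub s' (1, 0)) (0, 2)) (0, 2)) (1, 0) = s'
    rw [sadd_ssub h02', sadd_ssub h10]
  · intro s hs
    rw [mem_Bfin] at hs
    exact edgeD u hw n s hs.2.2.1 hs.2.2.2



lemma eq_pair_of {q : ℕ × ℕ} {a b : ℕ} (h1 : q.1 = a) (h2 : q.2 = b) : q = (a, b) := by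
  rw [Prod.ext_iff]; exact ⟨h1, h2⟩

/-- reindexing for the `A` edges -/
lemma sumA (u : ℕ × ℕ → ℝ) (hw : u (0, 1) ≠ 0) (n : ℕ) :
    ∑ s ∈ Bfin n, ∑ q ∈ s.support,
        coJ s * ((s q : ℕ) : ℝ) * Pp u (ssub s q) * u (q.1 + 1, q.2)
          / (u (0, 1)) ^ (msum s)
      = ∑ s' ∈ Bfin (n + 1),
          ∑ q' ∈ s'.support.filter (fun r => 1 ≤ r.1 ∧ r ≠ (1, 0) ∧ r ≠ (1, 1)),
            ((q'.1 * s' q' : ℕ) : ℝ) / ((n : ℝ) + 1) * termJ u s' := by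
  classical
  rw [Finset.sum_sigma', Finset.sum_sigma']
  refine Finset.sum_bij'
    (fun p _ => ⟨sadd (ssub p.1 p.2) (p.2.1 + 1, p.2.2), (p.2.1 + 1, p.2.2)⟩)
    (fun p _ => ⟨sadd (ssub p.1 p.2) (p.2.1 - 1, p.2.2), (p.2.1 - 1, p.2.2)⟩)
    ?_ ?_ ?_ ?_ ?_
  · rintro ⟨s, q⟩ hp
    rw [Finset.mem_sigma] at hp
    dsimp only at hp
    obtain ⟨hs, hq⟩ := hp
    rw [mem_Bfin] at hs
    obtain ⟨h00, h01, hnps, hmm⟩ := hs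
    have hnps' : nps s = n := hnps
    have hmm' : nts s + 1 = msum s := hmm
    have hq1 : 1 ≤ s q := one_le_of_mem hq
    have hq00 : q ≠ (0, 0) := by intro h; rw [h, h00] at hq1; omega
    have hq01 : q ≠ (0, 1) := by intro h; rw [h, h01] at hq1; omega
    have hdec : sadd (ssub s q) q = s := sadd_ssub hq1
    have dn : nps s = nps (ssub s q) + q.1 := by
      conv_lhs => rw [← hdec]
      exact nps_sadd _ _
    have dt : nts s = nts (ssub s q) + q.2 := by
      conv_lhs => rw [← hdec]
      exact nts_sadd _ _
    have dm : msum s = msum (ssub s q) + 1 := by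
      conv_lhs => rw [← hdec]
      exact msum_sadd _ _
    rw [Finset.mem_sigma]
    constructor
    · rw [mem_Bfin]
      refine ⟨?_, ?_, ?_, ?_⟩
      · show sadd (ssub s q) (q.1 + 1, q.2) (0, 0) = 0
        rw [sadd_apply_ne _ (by intro h; rw [Prod.ext_iff] at h; omega),
          ssub_apply_ne _ (fun h => hq00 h.symm)]
        exact h00
      · show sadd (ssub s q) (q.1 + 1, q.2) (0, 1) = 0
        rw [sadd_apply_ne _ (by intro h; rw [Prod.ext_iff] at h; omega),
          ssub_apply_ne _ (fun h => hq01 h.symm)]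
        exact h01
      · show nps (sadd (ssub s q) (q.1 + 1, q.2)) = n + 1
        have := nps_sadd (ssub s q) (q.1 + 1, q.2)
        rw [this]
        show nps (ssub s q) + (q.1 + 1) = n + 1
        omega
      · show nts (sadd (ssub s q) (q.1 + 1, q.2)) + 1 = msum (sadd (ssub s q) (q.1 + 1, q.2))
        have e1 := nts_sadd (ssub s q) (q.1 + 1, q.2)
        have e2 := msum_sadd (ssub s q) (q.1 + 1, q.2)
        rw [e1, e2]
        show nts (ssub s q) + q.2 + 1 = msum (ssub s q) + 1
        omega
    · rw [Finset.mem_filter]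
      refine ⟨mem_support_sadd_self _ _, ?_, ?_, ?_⟩
      · show 1 ≤ q.1 + 1
        omega
      · show ((q.1 + 1, q.2) : ℕ × ℕ) ≠ (1, 0)
        intro h
        rw [Prod.mk.injEq] at h
        exact hq00 (eq_pair_of (by omega) h.2)
      · show ((q.1 + 1, q.2) : ℕ × ℕ) ≠ (1, 1)
        intro h
        rw [Prod.mk.injEq] at h
        exact hq01 (eq_pair_of (by omega) h.2)
  · rintro ⟨s', q'⟩ hp
    rw [Finset.mem_sigma] at hp
    dsimp only at hp
    obtain ⟨hs', hq'⟩ := hp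
    rw [Finset.mem_filter] at hq'
    obtain ⟨hq'supp, hc1, hc2, hc3⟩ := hq'
    rw [mem_Bfin] at hs'
    obtain ⟨h00, h01, hnps, hmm⟩ := hs'
    have hnps' : nps s' = n + 1 := hnps
    have hmm' : nts s' + 1 = msum s' := hmm
    have hq1 : 1 ≤ s' q' := one_le_of_mem hq'supp
    have hq00 : q' ≠ (0, 0) := by intro h; rw [h] at hc1; exact absurd hc1 (by norm_num)
    have hq01 : q' ≠ (0, 1) := by intro h; rw [h] at hc1; exact absurd hc1 (by norm_num)
    have hdec : sadd (ssub s' q') q' = s' := sadd_ssub hq1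
    have dn : nps s' = nps (ssub s' q') + q'.1 := by
      conv_lhs => rw [← hdec]
      exact nps_sadd _ _
    have dt : nts s' = nts (ssub s' q') + q'.2 := by
      conv_lhs => rw [← hdec]
      exact nts_sadd _ _
    have dm : msum s' = msum (ssub s' q') + 1 := by
      conv_lhs => rw [← hdec]
      exact msum_sadd _ _
    rw [Finset.mem_sigma]
    constructor
    · rw [mem_Bfin]
      refine ⟨?_, ?_, ?_, ?_⟩
      · show sadd (ssub s' q') (q'.1 - 1, q'.2) (0, 0) = 0
        rw [sadd_apply_ne _ (by
            intro h
            rw [Prod.mk.injEq] at h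
            exact hc2 (eq_pair_of (by omega) (by omega))),
          ssub_apply_ne _ (fun h => hq00 h.symm)]
        exact h00
      · show sadd (ssub s' q') (q'.1 - 1, q'.2) (0, 1) = 0
        rw [sadd_apply_ne _ (by
            intro h
            rw [Prod.mk.injEq] at h
            exact hc3 (eq_pair_of (by omega) (by omega))),
          ssub_apply_ne _ (fun h => hq01 h.symm)]
        exact h01
      · show nps (sadd (ssub s' q') (q'.1 - 1, q'.2)) = n
        have := nps_sadd (ssub s' q') (q'.1 - 1, q'.2)
        rw [this]
        show nps (ssub s' q') + (q'.1 - 1) = n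
        omega
      · show nts (sadd (ssub s' q') (q'.1 - 1, q'.2)) + 1 = msum (sadd (ssub s' q') (q'.1 - 1, q'.2))
        have e1 := nts_sadd (ssub s' q') (q'.1 - 1, q'.2)
        have e2 := msum_sadd (ssub s' q') (q'.1 - 1, q'.2)
        rw [e1, e2]
        show nts (ssub s' q') + q'.2 + 1 = msum (ssub s' q') + 1
        omega
    · exact mem_support_sadd_self _ _
  · rintro ⟨s, q⟩ hp
    rw [Finset.mem_sigma] at hp
    dsimp only at hp
    have hq1 : 1 ≤ s q := one_le_of_mem hp.2
    simp only [ssub_sadd]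
    have hq' : (q.1 + 1 - 1, q.2) = q := by
      rw [Prod.ext_iff]
      exact ⟨by omega, rfl⟩
    rw [hq', sadd_ssub hq1]
  · rintro ⟨s', q'⟩ hp
    rw [Finset.mem_sigma] at hp
    dsimp only at hp
    obtain ⟨hs', hq'⟩ := hp
    rw [Finset.mem_filter] at hq'
    obtain ⟨hq'supp, hc1, -, -⟩ := hq'
    have hq1 : 1 ≤ s' q' := one_le_of_mem hq'supp
    simp only [ssub_sadd]
    have hq'eq : (q'.1 - 1 + 1, q'.2) = q' := by
      rw [Prod.ext_iff]
      exact ⟨by omega, rfl⟩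
    rw [hq'eq, sadd_ssub hq1]
  · rintro ⟨s, q⟩ hp
    rw [Finset.mem_sigma] at hp
    dsimp only at hp
    obtain ⟨hs, hq⟩ := hp
    rw [mem_Bfin] at hs
    have hq1 : 1 ≤ s q := one_le_of_mem hq
    have hn' : nps (sadd (ssub s q) q) = n := by
      rw [sadd_ssub hq1]; exact hs.2.2.1
    have := edgeA u hw n (ssub s q) q hn'
    rw [sadd_ssub hq1] at this
    exact this

/-- reindexing for the `B` edges -/
lemma sumB (u : ℕ × ℕ → ℝ) (hw : u (0, 1) ≠ 0) (n : ℕ) :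
    ∑ s ∈ Bfin n, ∑ q ∈ s.support,
        -(coJ s * ((s q : ℕ) : ℝ) * Pp u (ssub s q) * u (q.1, q.2 + 1) * u (1, 0))
          / (u (0, 1)) ^ (msum s + 1)
      = ∑ s' ∈ Bfin (n + 1),
          ∑ q' ∈ s'.support.filter
            (fun r => 1 ≤ r.2 ∧ r ≠ (0, 1) ∧ r ≠ (0, 2) ∧ 1 ≤ s' (1, 0)),
            ((q'.2 * s' q' * s' (1, 0) : ℕ) : ℝ)
              / (((n : ℝ) + 1) * ((nts s' : ℕ) : ℝ)) * termJ u s' := by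
  classical
  rw [Finset.sum_sigma', Finset.sum_sigma']
  refine Finset.sum_bij'
    (fun p _ => ⟨sadd (sadd (ssub p.1 p.2) (p.2.1, p.2.2 + 1)) (1, 0), (p.2.1, p.2.2 + 1)⟩)
    (fun p _ => ⟨sadd (ssub (ssub p.1 (1, 0)) p.2) (p.2.1, p.2.2 - 1), (p.2.1, p.2.2 - 1)⟩)
    ?_ ?_ ?_ ?_ ?_
  · rintro ⟨s, q⟩ hp
    rw [Finset.mem_sigma] at hp
    dsimp only at hp
    obtain ⟨hs, hq⟩ := hp
    rw [mem_Bfin] at hs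
    obtain ⟨h00, h01, hnps, hmm⟩ := hs
    have hnps' : nps s = n := hnps
    have hmm' : nts s + 1 = msum s := hmm
    have hq1 : 1 ≤ s q := one_le_of_mem hq
    have hq00 : q ≠ (0, 0) := by intro h; rw [h, h00] at hq1; omega
    have hq01 : q ≠ (0, 1) := by intro h; rw [h, h01] at hq1; omega
    have hdec : sadd (ssub s q) q = s := sadd_ssub hq1
    have dn : nps s = nps (ssub s q) + q.1 := by
      conv_lhs => rw [← hdec]; exact nps_sadd _ _
    have dt : nts s = nts (ssub s q) + q.2 := by
      conv_lhs => rw [← hdec]; exact nts_sadd _ _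
    have dm : msum s = msum (ssub s q) + 1 := by
      conv_lhs => rw [← hdec]; exact msum_sadd _ _
    have hne10 : ((q.1, q.2 + 1) : ℕ × ℕ) ≠ (1, 0) := by
      intro h; rw [Prod.ext_iff] at h; omega
    rw [Finset.mem_sigma]
    constructor
    · rw [mem_Bfin]
      refine ⟨?_, ?_, ?_, ?_⟩
      · show sadd (sadd (ssub s q) (q.1, q.2 + 1)) (1, 0) (0, 0) = 0
        rw [sadd_apply_ne _ (by decide),
          sadd_apply_ne _ (by
            intro h
            rw [Prod.mk.injEq] at h
            omega),
          ssub_apply_ne _ (fun h => hq00 h.symm)]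
        exact h00
      · show sadd (sadd (ssub s q) (q.1, q.2 + 1)) (1, 0) (0, 1) = 0
        rw [sadd_apply_ne _ (by
            intro h
            rw [Prod.mk.injEq] at h
            omega),
          sadd_apply_ne _ (by
            intro h
            rw [Prod.mk.injEq] at h
            exact hq00 (eq_pair_of h.1.symm (by omega))),
          ssub_apply_ne _ (fun h => hq01 h.symm)]
        exact h01
      · show nps (sadd (sadd (ssub s q) (q.1, q.2 + 1)) (1, 0)) = n + 1
        have e1 := nps_sadd (sadd (ssub s q) (q.1, q.2 + 1)) (1, 0)
        have e2 := nps_sadd (ssub s q) (q.1, q.2 + 1)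
        rw [e1, e2]
        show nps (ssub s q) + q.1 + 1 = n + 1
        omega
      · show nts (sadd (sadd (ssub s q) (q.1, q.2 + 1)) (1, 0)) + 1
            = msum (sadd (sadd (ssub s q) (q.1, q.2 + 1)) (1, 0))
        have e1 := nts_sadd (sadd (ssub s q) (q.1, q.2 + 1)) (1, 0)
        have e2 := nts_sadd (ssub s q) (q.1, q.2 + 1)
        have e3 := msum_sadd (sadd (ssub s q) (q.1, q.2 + 1)) (1, 0)
        have e4 := msum_sadd (ssub s q) (q.1, q.2 + 1)
        rw [e1, e2, e3, e4]
        show nts (ssub s q) + (q.2 + 1) + 0 + 1 = msum (ssub s q) + 1 + 1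
        omega
    · rw [Finset.mem_filter]
      refine ⟨?_, ?_, ?_, ?_, ?_⟩
      · rw [Finsupp.mem_support_iff, sadd_apply_ne _ hne10, sadd_apply_self]
        omega
      · show 1 ≤ q.2 + 1
        omega
      · show ((q.1, q.2 + 1) : ℕ × ℕ) ≠ (0, 1)
        intro h
        rw [Prod.mk.injEq] at h
        exact hq00 (eq_pair_of h.1 (by omega))
      · show ((q.1, q.2 + 1) : ℕ × ℕ) ≠ (0, 2)
        intro h
        rw [Prod.mk.injEq] at h
        exact hq01 (eq_pair_of h.1 (by omega))
      · rw [sadd_apply_self]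
        omega
  · rintro ⟨s', q'⟩ hp
    rw [Finset.mem_sigma] at hp
    dsimp only at hp
    obtain ⟨hs', hq'⟩ := hp
    rw [Finset.mem_filter] at hq'
    obtain ⟨hq'supp, hc1, hc2, hc3, hc4⟩ := hq'
    rw [mem_Bfin] at hs'
    obtain ⟨h00, h01, hnps, hmm⟩ := hs'
    have hnps' : nps s' = n + 1 := hnps
    have hmm' : nts s' + 1 = msum s' := hmm
    have hq1 : 1 ≤ s' q' := one_le_of_mem hq'supp
    have hqne10 : q' ≠ (1, 0) := by intro h; rw [h] at hc1; exact absurd hc1 (by norm_num)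
    have hq1' : 1 ≤ (ssub s' (1, 0)) q' := by
      rw [ssub_apply_ne _ hqne10]; exact hq1
    have hdec1 : sadd (ssub s' (1, 0)) (1, 0) = s' := sadd_ssub hc4
    have hdec2 : sadd (ssub (ssub s' (1, 0)) q') q' = ssub s' (1, 0) := sadd_ssub hq1'
    set t := ssub (ssub s' (1, 0)) q' with ht
    have dn : nps s' = nps t + q'.1 + 1 := by
      conv_lhs => rw [← hdec1]
      rw [nps_sadd]
      conv_lhs => rw [← hdec2]
      rw [nps_sadd]
    have dt : nts s' = nts t + q'.2 + 0 := by
      conv_lhs => rw [← hdec1]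
      rw [nts_sadd]
      conv_lhs => rw [← hdec2]
      rw [nts_sadd]
    have dm : msum s' = msum t + 1 + 1 := by
      conv_lhs => rw [← hdec1]
      rw [msum_sadd]
      conv_lhs => rw [← hdec2]
      rw [msum_sadd]
    rw [Finset.mem_sigma]
    constructor
    · rw [mem_Bfin]
      refine ⟨?_, ?_, ?_, ?_⟩
      · show sadd t (q'.1, q'.2 - 1) (0, 0) = 0
        have hq00' : ((0, 0) : ℕ × ℕ) ≠ q' := by
          intro h
          rw [← h] at hc1
          exact absurd hc1 (by norm_num)
        rw [sadd_apply_ne _ (by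
            intro h
            rw [Prod.mk.injEq] at h
            exact hc2 (eq_pair_of h.1.symm (by omega))),
          ht, ssub_apply_ne _ hq00',
          ssub_apply_ne _ (by decide)]
        exact h00
      · show sadd t (q'.1, q'.2 - 1) (0, 1) = 0
        have hq01' : ((0, 1) : ℕ × ℕ) ≠ q' := fun h => hc2 h.symm
        rw [sadd_apply_ne _ (by
            intro h
            rw [Prod.mk.injEq] at h
            exact hc3 (eq_pair_of h.1.symm (by omega))),
          ht, ssub_apply_ne _ hq01',
          ssub_apply_ne _ (by decide)]
        exact h01
      · show nps (sadd t (q'.1, q'.2 - 1)) = n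
        rw [nps_sadd]
        show nps t + q'.1 = n
        omega
      · show nts (sadd t (q'.1, q'.2 - 1)) + 1 = msum (sadd t (q'.1, q'.2 - 1))
        rw [nts_sadd, msum_sadd]
        show nts t + (q'.2 - 1) + 1 = msum t + 1
        omega
    · exact mem_support_sadd_self _ _
  · rintro ⟨s, q⟩ hp
    rw [Finset.mem_sigma] at hp
    dsimp only at hp
    have hq1 : 1 ≤ s q := one_le_of_mem hp.2
    simp only [ssub_sadd]
    have hq' : (q.1, q.2 + 1 - 1) = q := by
      rw [Prod.ext_iff]
      exact ⟨rfl, by omega⟩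
    rw [hq', sadd_ssub hq1]
  · rintro ⟨s', q'⟩ hp
    rw [Finset.mem_sigma] at hp
    dsimp only at hp
    obtain ⟨hs', hq'⟩ := hp
    rw [Finset.mem_filter] at hq'
    obtain ⟨hq'supp, hc1, -, -, hc4⟩ := hq'
    have hq1 : 1 ≤ s' q' := one_le_of_mem hq'supp
    have hqne10 : q' ≠ (1, 0) := by intro h; rw [h] at hc1; exact absurd hc1 (by norm_num)
    have hq1' : 1 ≤ (ssub s' (1, 0)) q' := by
      rw [ssub_apply_ne _ hqne10]; exact hq1
    simp only [ssub_sadd]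
    have hq'eq : (q'.1, q'.2 - 1 + 1) = q' := by
      rw [Prod.ext_iff]
      exact ⟨rfl, by omega⟩
    rw [hq'eq, sadd_ssub hq1', sadd_ssub hc4]
  · rintro ⟨s, q⟩ hp
    rw [Finset.mem_sigma] at hp
    dsimp only at hp
    obtain ⟨hs, hq⟩ := hp
    rw [mem_Bfin] at hs
    have hq1 : 1 ≤ s q := one_le_of_mem hq
    have hn' : nps (sadd (ssub s q) q) = n := by
      rw [sadd_ssub hq1]; exact hs.2.2.1
    have := edgeB u hw n (ssub s q) q hn'
    rw [sadd_ssub hq1] at this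
    exact this



/-- smoothness index helpers -/
lemma inf_le : ∀ (m : ℕ∞), ((m : WithTop ℕ∞)) ≤ ((⊤ : ℕ∞) : WithTop ℕ∞) := by
  intro m; exact_mod_cast le_top

lemma inf_add_one_le : ((⊤ : ℕ∞) : WithTop ℕ∞) + 1 ≤ ((⊤ : ℕ∞) : WithTop ℕ∞) := by
  have : ((⊤ : ℕ∞) : WithTop ℕ∞) + 1 = ((⊤ : ℕ∞) : WithTop ℕ∞) := by
    rw [← WithTop.coe_one, ← WithTop.coe_add]
    norm_num
  rw [this]

lemma two_le_inf : (2 : WithTop ℕ∞) ≤ ((⊤ : ℕ∞) : WithTop ℕ∞) := by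
  have : ((2:ℕ∞) : WithTop ℕ∞) ≤ ((⊤ : ℕ∞) : WithTop ℕ∞) := WithTop.coe_le_coe.mpr le_top
  simpa using this

lemma one_le_inf : (1 : WithTop ℕ∞) ≤ ((⊤ : ℕ∞) : WithTop ℕ∞) := by
  have : ((1:ℕ∞) : WithTop ℕ∞) ≤ ((⊤ : ℕ∞) : WithTop ℕ∞) := WithTop.coe_le_coe.mpr le_top
  simpa using this

/-- `Smo U g` : `g` (uncurried) is `C^∞` at every point of `U`. -/
def Smo (U : Set (ℝ × ℝ)) (g : ℝ → ℝ → ℝ) : Prop :=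
  ∀ q ∈ U, ContDiffAt ℝ (⊤ : ℕ∞) (Function.uncurry g) q

/-- partial derivative operators -/
noncomputable def Dx (g : ℝ → ℝ → ℝ) : ℝ → ℝ → ℝ := fun x y => deriv (fun x' => g x' y) x
noncomputable def Dy (g : ℝ → ℝ → ℝ) : ℝ → ℝ → ℝ := fun x y => deriv (fun y' => g x y') y

lemma pd_zero_zero (g : ℝ → ℝ → ℝ) : pd g 0 0 = g := by
  funext x y; simp [pd]

lemma pd_one_zero (g : ℝ → ℝ → ℝ) : pd g 1 0 = Dx g := by
  funext x y; simp [pd, Dx, iteratedDeriv_one]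

lemma pd_zero_one (g : ℝ → ℝ → ℝ) : pd g 0 1 = Dy g := by
  funext x y; simp [pd, Dy, iteratedDeriv_one]

lemma pd_zero_t (g : ℝ → ℝ → ℝ) (t : ℕ) (x b : ℝ) :
    pd g 0 t x b = iteratedDeriv t (fun y' => g x y') b := by
  simp [pd]

lemma pd_succ_left (g : ℝ → ℝ → ℝ) (p t : ℕ) : pd g (p + 1) t = Dx (pd g p t) := by
  funext x y
  simp only [pd, Dx, iteratedDeriv_succ]

lemma pd_dy_zero (g : ℝ → ℝ → ℝ) (t : ℕ) : Dy (pd g 0 t) = pd g 0 (t + 1) := by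
  funext x y
  simp only [pd, Dy, iteratedDeriv_zero, iteratedDeriv_succ]

lemma pd_shift_y (g : ℝ → ℝ → ℝ) (p t : ℕ) : pd g p (t + 1) = pd (Dy g) p t := by
  funext x y
  simp only [pd, Dy]
  congr 1
  funext x'
  rw [iteratedDeriv_succ']

/-- For `C^∞` points, the `x`-partial derivative is the `fderiv` applied to `(1,0)`. -/
lemma hasDerivAt_fst {g : ℝ → ℝ → ℝ} {a b : ℝ}
    (hg : ContDiffAt ℝ (⊤ : ℕ∞) (Function.uncurry g) (a, b)) :
    HasDerivAt (fun x => g x b) (fderiv ℝ (Function.uncurry g) (a, b) (1, 0)) a := by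
  have hd : DifferentiableAt ℝ (Function.uncurry g) (a, b) := hg.differentiableAt (by simp)
  have hc : HasDerivAt (fun x : ℝ => (x, b)) ((1 : ℝ), (0 : ℝ)) a :=
    (hasDerivAt_id a).prodMk (hasDerivAt_const a b)
  exact hd.hasFDerivAt.comp_hasDerivAt a hc

lemma hasDerivAt_snd {g : ℝ → ℝ → ℝ} {a b : ℝ}
    (hg : ContDiffAt ℝ (⊤ : ℕ∞) (Function.uncurry g) (a, b)) :
    HasDerivAt (fun y => g a y) (fderiv ℝ (Function.uncurry g) (a, b) (0, 1)) b := by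
  have hd : DifferentiableAt ℝ (Function.uncurry g) (a, b) := hg.differentiableAt (by simp)
  have hc : HasDerivAt (fun y : ℝ => (a, y)) ((0 : ℝ), (1 : ℝ)) b :=
    (hasDerivAt_const b a).prodMk (hasDerivAt_id b)
  exact hd.hasFDerivAt.comp_hasDerivAt b hc

lemma Dx_eq_fderiv {g : ℝ → ℝ → ℝ} {a b : ℝ}
    (hg : ContDiffAt ℝ (⊤ : ℕ∞) (Function.uncurry g) (a, b)) :
    Dx g a b = fderiv ℝ (Function.uncurry g) (a, b) (1, 0) := (hasDerivAt_fst hg).deriv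

lemma Dy_eq_fderiv {g : ℝ → ℝ → ℝ} {a b : ℝ}
    (hg : ContDiffAt ℝ (⊤ : ℕ∞) (Function.uncurry g) (a, b)) :
    Dy g a b = fderiv ℝ (Function.uncurry g) (a, b) (0, 1) := (hasDerivAt_snd hg).deriv

lemma contDiffAt_fderiv_apply {g : ℝ → ℝ → ℝ} {q : ℝ × ℝ} (v : ℝ × ℝ)
    (hg : ContDiffAt ℝ (⊤ : ℕ∞) (Function.uncurry g) q) :
    ContDiffAt ℝ (⊤ : ℕ∞) (fun r => fderiv ℝ (Function.uncurry g) r v) q :=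
  (hg.fderiv_right inf_add_one_le).clm_apply contDiffAt_const

lemma Smo.Dx {U : Set (ℝ × ℝ)} (hU : IsOpen U) {g : ℝ → ℝ → ℝ} (hg : Smo U g) :
    Smo U (Dx g) := by
  intro q hq
  refine (contDiffAt_fderiv_apply (1, 0) (hg q hq)).congr_of_eventuallyEq ?_
  filter_upwards [hU.mem_nhds hq] with r hr
  exact Dx_eq_fderiv (hg r hr) |>.trans rfl |>.symm ▸ rfl

lemma Smo.Dy' {U : Set (ℝ × ℝ)} (hU : IsOpen U) {g : ℝ → ℝ → ℝ} (hg : Smo U g) :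
    Smo U (Dy g) := by
  intro q hq
  refine (contDiffAt_fderiv_apply (0, 1) (hg q hq)).congr_of_eventuallyEq ?_
  filter_upwards [hU.mem_nhds hq] with r hr
  exact Dy_eq_fderiv (hg r hr) |>.trans rfl |>.symm ▸ rfl

/-- Clairaut, in operator form. -/
lemma clairaut {U : Set (ℝ × ℝ)} (hU : IsOpen U) {h : ℝ → ℝ → ℝ} (hh : Smo U h)
    {a b : ℝ} (hq : (a, b) ∈ U) :
    Dy (Dx h) a b = Dx (Dy h) a b := by
  set H := Function.uncurry h with hH
  have hdd : HasFDerivAt (fderiv ℝ H) (fderiv ℝ (fderiv ℝ H) (a, b)) (a, b) :=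
    (((hh _ hq).fderiv_right inf_add_one_le).differentiableAt (by simp)).hasFDerivAt
  have hsym := ((hh _ hq).isSymmSndFDerivAt (by rw [minSmoothness_of_isRCLikeNormedField]; exact two_le_inf)).eq ((0:ℝ), (1:ℝ)) ((1:ℝ), (0:ℝ))
  -- LHS
  have hcurve1 : HasDerivAt (fun y' : ℝ => (a, y')) ((0 : ℝ), (1 : ℝ)) b :=
    (hasDerivAt_const b a).prodMk (hasDerivAt_id b)
  have h1 : HasDerivAt (fun y' => fderiv ℝ H (a, y')) (fderiv ℝ (fderiv ℝ H) (a, b) (0, 1)) b :=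
    hdd.comp_hasDerivAt b hcurve1
  have h1' : HasDerivAt (fun y' => fderiv ℝ H (a, y') (1, 0))
      (fderiv ℝ (fderiv ℝ H) (a, b) (0, 1) (1, 0)) b := by
    have := h1.clm_apply (hasDerivAt_const b ((1:ℝ), (0:ℝ)))
    simpa using this
  have hev1 : (fun y' => Dx h a y') =ᶠ[𝓝 b] fun y' => fderiv ℝ H (a, y') (1, 0) := by
    have hcont : ContinuousAt (fun y' : ℝ => (a, y')) b :=
      (continuous_const.prodMk continuous_id).continuousAt
    filter_upwards [hcont.preimage_mem_nhds (hU.mem_nhds hq)] with y' hy'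
    exact Dx_eq_fderiv (hh _ hy')
  have lhs : Dy (Dx h) a b = fderiv ℝ (fderiv ℝ H) (a, b) (0, 1) (1, 0) := by
    show deriv (fun y' => Dx h a y') b = _
    rw [hev1.deriv_eq, h1'.deriv]
  -- RHS
  have hcurve2 : HasDerivAt (fun x' : ℝ => (x', b)) ((1 : ℝ), (0 : ℝ)) a :=
    (hasDerivAt_id a).prodMk (hasDerivAt_const a b)
  have h2 : HasDerivAt (fun x' => fderiv ℝ H (x', b)) (fderiv ℝ (fderiv ℝ H) (a, b) (1, 0)) a :=
    hdd.comp_hasDerivAt a hcurve2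
  have h2' : HasDerivAt (fun x' => fderiv ℝ H (x', b) (0, 1))
      (fderiv ℝ (fderiv ℝ H) (a, b) (1, 0) (0, 1)) a := by
    have := h2.clm_apply (hasDerivAt_const a ((0:ℝ), (1:ℝ)))
    simpa using this
  have hev2 : (fun x' => Dy h x' b) =ᶠ[𝓝 a] fun x' => fderiv ℝ H (x', b) (0, 1) := by
    have hcont : ContinuousAt (fun x' : ℝ => (x', b)) a :=
      (continuous_id.prodMk continuous_const).continuousAt
    filter_upwards [hcont.preimage_mem_nhds (hU.mem_nhds hq)] with x' hx'
    exact Dy_eq_fderiv (hh _ hx')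
  have rhs : Dx (Dy h) a b = fderiv ℝ (fderiv ℝ H) (a, b) (1, 0) (0, 1) := by
    show deriv (fun x' => Dy h x' b) a = _
    rw [hev2.deriv_eq, h2'.deriv]
  rw [lhs, rhs, hsym]

/-- smoothness of all mixed partials, and commutation of ∂y with pd. -/
lemma smo_pd_and_dy {U : Set (ℝ × ℝ)} (hU : IsOpen U) {g : ℝ → ℝ → ℝ} (hg : Smo U g) :
    ∀ p t : ℕ, Smo U (pd g p t) ∧
      (∀ a b : ℝ, (a, b) ∈ U → Dy (pd g p t) a b = pd g p (t + 1) a b) := by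
  intro p
  induction p with
  | zero =>
    have hsmo : ∀ t, Smo U (pd g 0 t) := by
      intro t
      induction t with
      | zero => rw [pd_zero_zero]; exact hg
      | succ t ih =>
        rw [← pd_dy_zero]
        exact Smo.Dy' hU ih
    intro t
    refine ⟨hsmo t, ?_⟩
    intro a b _
    rw [pd_dy_zero]
  | succ p ih =>
    intro t
    constructor
    · rw [pd_succ_left]
      exact Smo.Dx hU (ih t).1
    · intro a b hab
      rw [pd_succ_left, pd_succ_left]
      rw [clairaut hU (ih t).1 hab]
      -- Dx (Dy (pd g p t)) a b = Dx (pd g p (t+1)) a b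
      show deriv (fun x' => Dy (pd g p t) x' b) a = deriv (fun x' => pd g p (t+1) x' b) a
      apply Filter.EventuallyEq.deriv_eq
      have hcont : ContinuousAt (fun x' : ℝ => (x', b)) a :=
        (continuous_id.prodMk continuous_const).continuousAt
      filter_upwards [hcont.preimage_mem_nhds (hU.mem_nhds hab)] with x' hx'
      exact (ih t).2 x' b hx'

lemma smo_pd {U : Set (ℝ × ℝ)} (hU : IsOpen U) {g : ℝ → ℝ → ℝ} (hg : Smo U g) (p t : ℕ) :
    Smo U (pd g p t) := (smo_pd_and_dy hU hg p t).1

/-- The chain rule for `x ↦ pd g p t x (y x)`. -/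
lemma hasDerivAt_pd_comp {U : Set (ℝ × ℝ)} (hU : IsOpen U) {g : ℝ → ℝ → ℝ} (hg : Smo U g)
    {y : ℝ → ℝ} {x y' : ℝ} (hx : (x, y x) ∈ U) (hy : HasDerivAt y y' x) (p t : ℕ) :
    HasDerivAt (fun x' => pd g p t x' (y x'))
      (pd g (p + 1) t x (y x) + pd g p (t + 1) x (y x) * y') x := by
  set h := pd g p t with hh
  have hsm : ContDiffAt ℝ (⊤ : ℕ∞) (Function.uncurry h) (x, y x) := smo_pd hU hg p t _ hx
  have hd : DifferentiableAt ℝ (Function.uncurry h) (x, y x) := hsm.differentiableAt (by simp)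
  have hc : HasDerivAt (fun x' : ℝ => (x', y x')) ((1 : ℝ), y') x :=
    (hasDerivAt_id x).prodMk hy
  have hcomp : HasDerivAt (fun x' => h x' (y x'))
      (fderiv ℝ (Function.uncurry h) (x, y x) (1, y')) x := by
    exact hd.hasFDerivAt.comp_hasDerivAt x hc
  have hsplit : ((1 : ℝ), y') = ((1 : ℝ), (0 : ℝ)) + y' • ((0 : ℝ), (1 : ℝ)) := by
    simp [Prod.ext_iff]
  have heq : fderiv ℝ (Function.uncurry h) (x, y x) (1, y')
      = pd g (p + 1) t x (y x) + pd g p (t + 1) x (y x) * y' := by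
    rw [hsplit, map_add, map_smul]
    rw [← Dx_eq_fderiv hsm, ← Dy_eq_fderiv hsm]
    rw [pd_succ_left]
    rw [← (smo_pd_and_dy hU hg p t).2 x (y x) hx]
    simp [smul_eq_mul]
    ring
  rw [← heq]
  exact hcomp


lemma erase_ssub (s : (ℕ × ℕ) →₀ ℕ) (q : ℕ × ℕ) :
    Finsupp.erase q (ssub s q) = Finsupp.erase q s := by
  ext r
  by_cases hr : r = q
  · subst hr; rw [Finsupp.erase_same, Finsupp.erase_same]
  · rw [Finsupp.erase_ne hr, Finsupp.erase_ne hr, ssub_apply_ne _ hr]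

lemma prod_erase_eq (u : ℕ × ℕ → ℝ) (s : (ℕ × ℕ) →₀ ℕ) (q : ℕ × ℕ) :
    (Finsupp.erase q s).prod (fun r c => u r ^ c) = ∏ r ∈ s.support.erase q, u r ^ s r := by
  rw [Finsupp.prod, Finsupp.support_erase]
  refine Finset.prod_congr rfl fun r hr => ?_
  rw [Finsupp.erase_ne (Finset.ne_of_mem_erase hr)]

lemma Pp_ssub (u : ℕ × ℕ → ℝ) {s : (ℕ × ℕ) →₀ ℕ} (q : ℕ × ℕ) :
    Pp u (ssub s q) = u q ^ (s q - 1) * ∏ r ∈ s.support.erase q, u r ^ s r := by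
  show (ssub s q).prod (fun r c => u r ^ c) = _
  rw [← Finsupp.mul_prod_erase' (ssub s q) q _ (fun r => pow_zero _), ssub_apply_self,
    erase_ssub, prod_erase_eq]

/-- Conversion of the raw quotient-rule derivative into edge form. -/
lemma value_convert (u : ℕ × ℕ → ℝ) (y' : ℝ) (hw : u (0, 1) ≠ 0)
    (hy' : y' = -(u (1, 0)) / u (0, 1))
    (s : (ℕ × ℕ) →₀ ℕ) (hm : 1 ≤ msum s) :
    (coJ s * (∑ q ∈ s.support, (∏ r ∈ s.support.erase q, u r ^ s r)
          • ((s q : ℝ) * u q ^ (s q - 1) * (u (q.1 + 1, q.2) + u (q.1, q.2 + 1) * y')))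
        * u (0, 1) ^ msum s
      - coJ s * Pp u s * ((msum s : ℝ) * u (0, 1) ^ (msum s - 1)
          * (u (1, 1) + u (0, 2) * y')))
      / (u (0, 1) ^ msum s) ^ 2
    = ∑ q ∈ s.support,
        (coJ s * ((s q : ℕ) : ℝ) * Pp u (ssub s q) * u (q.1 + 1, q.2) / u (0, 1) ^ msum s
          + -(coJ s * ((s q : ℕ) : ℝ) * Pp u (ssub s q) * u (q.1, q.2 + 1) * u (1, 0))
              / u (0, 1) ^ (msum s + 1))
      + -(coJ s * ((msum s : ℕ) : ℝ) * Pp u s * u (1, 1)) / u (0, 1) ^ (msum s + 1)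
      + coJ s * ((msum s : ℕ) : ℝ) * Pp u s * u (0, 2) * u (1, 0)
          / u (0, 1) ^ (msum s + 2) := by
  obtain ⟨k, hk⟩ : ∃ k, msum s = k + 1 := ⟨msum s - 1, by omega⟩
  rw [hk]
  rw [show k + 1 - 1 = k from rfl]
  have hsum : ∀ q ∈ s.support,
      (∏ r ∈ s.support.erase q, u r ^ s r)
          • ((s q : ℝ) * u q ^ (s q - 1) * (u (q.1 + 1, q.2) + u (q.1, q.2 + 1) * y'))
        = (s q : ℝ) * Pp u (ssub s q) * (u (q.1 + 1, q.2) + u (q.1, q.2 + 1) * y') := by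
    intro q hq
    rw [smul_eq_mul, Pp_ssub u q]
    ring
  rw [Finset.sum_congr rfl hsum]
  rw [Finset.mul_sum, Finset.sum_mul, sub_div, Finset.sum_div]
  have hterm : ∀ q ∈ s.support,
      coJ s * ((s q : ℝ) * Pp u (ssub s q) * (u (q.1 + 1, q.2) + u (q.1, q.2 + 1) * y'))
          * u (0, 1) ^ (k + 1) / (u (0, 1) ^ (k + 1)) ^ 2
        = coJ s * ((s q : ℕ) : ℝ) * Pp u (ssub s q) * u (q.1 + 1, q.2) / u (0, 1) ^ (k + 1)
          + -(coJ s * ((s q : ℕ) : ℝ) * Pp u (ssub s q) * u (q.1, q.2 + 1) * u (1, 0))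
              / u (0, 1) ^ (k + 1 + 1) := by
    intro q hq
    rw [hy']
    field_simp
    ring
  rw [Finset.sum_congr rfl hterm]
  have hden : coJ s * Pp u s * (((k + 1 : ℕ) : ℝ) * u (0, 1) ^ k * (u (1, 1) + u (0, 2) * y'))
        / (u (0, 1) ^ (k + 1)) ^ 2
      = coJ s * ((k + 1 : ℕ) : ℝ) * Pp u s * u (1, 1) / u (0, 1) ^ (k + 1 + 1)
        - coJ s * ((k + 1 : ℕ) : ℝ) * Pp u s * u (0, 2) * u (1, 0) / u (0, 1) ^ (k + 1 + 2) := by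
    rw [hy']
    field_simp
    ring
  rw [hden]
  ring

/-- Derivative of one Johnson term along the implicit curve. -/
lemma hasDerivAt_termJ
    {U : Set (ℝ × ℝ)} (hU : IsOpen U) {f : ℝ → ℝ → ℝ} (hGU : Smo U f)
    {y : ℝ → ℝ} {x : ℝ} (hyd : HasDerivAt y (deriv y x) x)
    (hx : (x, y x) ∈ U) (hne : pd f 0 1 x (y x) ≠ 0)
    (hy'eq : deriv y x = -(pd f 1 0 x (y x)) / pd f 0 1 x (y x))
    (s : (ℕ × ℕ) →₀ ℕ) (hm : 1 ≤ msum s) :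
    HasDerivAt (fun x' => termJ (fun q => pd f q.1 q.2 x' (y x')) s)
      (∑ q ∈ s.support,
          (coJ s * ((s q : ℕ) : ℝ)
              * Pp (fun r => pd f r.1 r.2 x (y x)) (ssub s q)
              * (fun r : ℕ × ℕ => pd f r.1 r.2 x (y x)) (q.1 + 1, q.2)
              / ((fun r : ℕ × ℕ => pd f r.1 r.2 x (y x)) (0, 1)) ^ msum s
            + -(coJ s * ((s q : ℕ) : ℝ)
                * Pp (fun r => pd f r.1 r.2 x (y x)) (ssub s q)
                * (fun r : ℕ × ℕ => pd f r.1 r.2 x (y x)) (q.1, q.2 + 1)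
                * (fun r : ℕ × ℕ => pd f r.1 r.2 x (y x)) (1, 0))
                / ((fun r : ℕ × ℕ => pd f r.1 r.2 x (y x)) (0, 1)) ^ (msum s + 1))
        + -(coJ s * ((msum s : ℕ) : ℝ) * Pp (fun r => pd f r.1 r.2 x (y x)) s
              * (fun r : ℕ × ℕ => pd f r.1 r.2 x (y x)) (1, 1))
            / ((fun r : ℕ × ℕ => pd f r.1 r.2 x (y x)) (0, 1)) ^ (msum s + 1)
        + coJ s * ((msum s : ℕ) : ℝ) * Pp (fun r => pd f r.1 r.2 x (y x)) s
              * (fun r : ℕ × ℕ => pd f r.1 r.2 x (y x)) (0, 2)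
              * (fun r : ℕ × ℕ => pd f r.1 r.2 x (y x)) (1, 0)
            / ((fun r : ℕ × ℕ => pd f r.1 r.2 x (y x)) (0, 1)) ^ (msum s + 2)) x := by
  have hu : ∀ q : ℕ × ℕ, HasDerivAt (fun x' => pd f q.1 q.2 x' (y x'))
      (pd f (q.1 + 1) q.2 x (y x) + pd f q.1 (q.2 + 1) x (y x) * deriv y x) x :=
    fun q => hasDerivAt_pd_comp hU hGU hx hyd q.1 q.2
  have hP : HasDerivAt (fun x' => Pp (fun q => pd f q.1 q.2 x' (y x')) s)
      (∑ q ∈ s.support,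
        (∏ r ∈ s.support.erase q, (fun r : ℕ × ℕ => pd f r.1 r.2 x (y x)) r ^ s r)
          • (((s q : ℕ) : ℝ) * ((fun r : ℕ × ℕ => pd f r.1 r.2 x (y x)) q) ^ (s q - 1)
            * ((fun r : ℕ × ℕ => pd f r.1 r.2 x (y x)) (q.1 + 1, q.2)
              + (fun r : ℕ × ℕ => pd f r.1 r.2 x (y x)) (q.1, q.2 + 1) * deriv y x))) x := by
    exact HasDerivAt.fun_finsetProd (fun q _ => (hu q).pow (s q))
  have hnum := hP.const_mul (coJ s)
  have hden : HasDerivAt (fun x' => (pd f 0 1 x' (y x')) ^ msum s)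
      (((msum s : ℕ) : ℝ) * (pd f 0 1 x (y x)) ^ (msum s - 1)
        * (pd f 1 1 x (y x) + pd f 0 2 x (y x) * deriv y x)) x := by
    exact (hu (0, 1)).pow (msum s)
  have hdiv := hnum.div hden (pow_ne_zero _ hne)
  have h2 := value_convert (fun r : ℕ × ℕ => pd f r.1 r.2 x (y x)) (deriv y x) hne hy'eq s hm
  rw [← h2]
  exact hdiv

/-- The combinatorial step: derivative sum over `B_n` equals the Johnson sum over `B_{n+1}`. -/
lemma step_identity (u : ℕ × ℕ → ℝ) (hw : u (0, 1) ≠ 0) (n : ℕ) (hn : 1 ≤ n) :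
    ∑ s ∈ Bfin n,
      (∑ q ∈ s.support,
          (coJ s * ((s q : ℕ) : ℝ) * Pp u (ssub s q) * u (q.1 + 1, q.2)
              / u (0, 1) ^ msum s
            + -(coJ s * ((s q : ℕ) : ℝ) * Pp u (ssub s q) * u (q.1, q.2 + 1) * u (1, 0))
                / u (0, 1) ^ (msum s + 1))
        + -(coJ s * ((msum s : ℕ) : ℝ) * Pp u s * u (1, 1)) / u (0, 1) ^ (msum s + 1)
        + coJ s * ((msum s : ℕ) : ℝ) * Pp u s * u (0, 2) * u (1, 0)
            / u (0, 1) ^ (msum s + 2))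
    = ∑ s' ∈ Bfin (n + 1), termJ u s' := by
  classical
  have hsplit1 : ∀ s ∈ Bfin n,
      (∑ q ∈ s.support,
          (coJ s * ((s q : ℕ) : ℝ) * Pp u (ssub s q) * u (q.1 + 1, q.2)
              / u (0, 1) ^ msum s
            + -(coJ s * ((s q : ℕ) : ℝ) * Pp u (ssub s q) * u (q.1, q.2 + 1) * u (1, 0))
                / u (0, 1) ^ (msum s + 1))
        + -(coJ s * ((msum s : ℕ) : ℝ) * Pp u s * u (1, 1)) / u (0, 1) ^ (msum s + 1)
        + coJ s * ((msum s : ℕ) : ℝ) * Pp u s * u (0, 2) * u (1, 0)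
            / u (0, 1) ^ (msum s + 2))
      = ((∑ q ∈ s.support,
          coJ s * ((s q : ℕ) : ℝ) * Pp u (ssub s q) * u (q.1 + 1, q.2)
              / u (0, 1) ^ msum s)
        + (∑ q ∈ s.support,
            -(coJ s * ((s q : ℕ) : ℝ) * Pp u (ssub s q) * u (q.1, q.2 + 1) * u (1, 0))
                / u (0, 1) ^ (msum s + 1)))
        + -(coJ s * ((msum s : ℕ) : ℝ) * Pp u s * u (1, 1)) / u (0, 1) ^ (msum s + 1)
        + coJ s * ((msum s : ℕ) : ℝ) * Pp u s * u (0, 2) * u (1, 0)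
            / u (0, 1) ^ (msum s + 2) := by
    intro s _
    rw [Finset.sum_add_distrib]
  rw [Finset.sum_congr rfl hsplit1]
  rw [Finset.sum_add_distrib, Finset.sum_add_distrib, Finset.sum_add_distrib]
  rw [sumA u hw n, sumB u hw n, sumC u hw n, sumD u hw n]
  -- extend the filtered sums of C and D to all of `Bfin (n+1)`
  have hCext : ∑ s' ∈ (Bfin (n + 1)).filter (fun s' => 1 ≤ s' (1, 1)),
        ((s' (1, 1) : ℕ) : ℝ) / ((n : ℝ) + 1) * termJ u s'
      = ∑ s' ∈ Bfin (n + 1), ((s' (1, 1) : ℕ) : ℝ) / ((n : ℝ) + 1) * termJ u s' := by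
    refine Finset.sum_filter_of_ne fun s' _ hne0 => ?_
    by_contra hc
    have h0 : s' (1, 1) = 0 := by omega
    apply hne0
    rw [h0]
    norm_num
  have hDext : ∑ s' ∈ (Bfin (n + 1)).filter (fun s' => 1 ≤ s' (0, 2) ∧ 1 ≤ s' (1, 0)),
        ((2 * s' (0, 2) * s' (1, 0) : ℕ) : ℝ)
          / (((n : ℝ) + 1) * ((nts s' : ℕ) : ℝ)) * termJ u s'
      = ∑ s' ∈ Bfin (n + 1),
          ((2 * s' (0, 2) * s' (1, 0) : ℕ) : ℝ)
            / (((n : ℝ) + 1) * ((nts s' : ℕ) : ℝ)) * termJ u s' := by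
    refine Finset.sum_filter_of_ne fun s' _ hne0 => ?_
    by_contra hc
    rw [not_and_or] at hc
    apply hne0
    have h0 : (2 * s' (0, 2) * s' (1, 0) : ℕ) = 0 := by
      rcases hc with hc | hc
      · have hz : s' (0, 2) = 0 := by omega
        rw [hz, Nat.mul_zero, Nat.zero_mul]
      · have hz : s' (1, 0) = 0 := by omega
        rw [hz, Nat.mul_zero]
    rw [h0]
    norm_num
  rw [hCext, hDext]
  rw [← Finset.sum_add_distrib, ← Finset.sum_add_distrib, ← Finset.sum_add_distrib]
  refine Finset.sum_congr rfl fun s' hs' => ?_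
  rw [mem_Bfin] at hs'
  have hwid := weight_id n hn s' hs'
  calc (∑ q' ∈ s'.support.filter (fun r => 1 ≤ r.1 ∧ r ≠ (1, 0) ∧ r ≠ (1, 1)),
          ((q'.1 * s' q' : ℕ) : ℝ) / ((n : ℝ) + 1) * termJ u s')
        + (∑ q' ∈ s'.support.filter
            (fun r => 1 ≤ r.2 ∧ r ≠ (0, 1) ∧ r ≠ (0, 2) ∧ 1 ≤ s' (1, 0)),
            ((q'.2 * s' q' * s' (1, 0) : ℕ) : ℝ)
              / (((n : ℝ) + 1) * ((nts s' : ℕ) : ℝ)) * termJ u s')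
        + ((s' (1, 1) : ℕ) : ℝ) / ((n : ℝ) + 1) * termJ u s'
        + ((2 * s' (0, 2) * s' (1, 0) : ℕ) : ℝ)
            / (((n : ℝ) + 1) * ((nts s' : ℕ) : ℝ)) * termJ u s'
      = ((∑ q' ∈ s'.support.filter (fun r => 1 ≤ r.1 ∧ r ≠ (1, 0) ∧ r ≠ (1, 1)),
          ((q'.1 * s' q' : ℕ) : ℝ) / ((n : ℝ) + 1))
        + (∑ q' ∈ s'.support.filter
            (fun r => 1 ≤ r.2 ∧ r ≠ (0, 1) ∧ r ≠ (0, 2) ∧ 1 ≤ s' (1, 0)),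
            ((q'.2 * s' q' * s' (1, 0) : ℕ) : ℝ)
              / (((n : ℝ) + 1) * ((nts s' : ℕ) : ℝ)))
        + ((s' (1, 1) : ℕ) : ℝ) / ((n : ℝ) + 1)
        + ((2 * s' (0, 2) * s' (1, 0) : ℕ) : ℝ)
            / (((n : ℝ) + 1) * ((nts s' : ℕ) : ℝ))) * termJ u s' := by
        rw [← Finset.sum_mul, ← Finset.sum_mul]
        ring
    _ = termJ u s' := by rw [hwid, one_mul]

lemma Bfin_one : Bfin 1 = {Finsupp.single ((1 : ℕ), (0 : ℕ)) 1} := by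
  ext s
  rw [mem_Bfin, Finset.mem_singleton]
  constructor
  · intro hs
    have hnps : nps s = 1 := hs.2.2.1
    have hmm : nts s + 1 = msum s := hs.2.2.2
    have hmsum : msum s + 1 ≤ 2 := msum_le_of_Bmem hs
    have hnts : nts s = 0 := by omega
    have key : ∀ q ∈ s.support, q = ((1 : ℕ), (0 : ℕ)) := by
      intro q hq
      have hq1 : 1 ≤ s q := one_le_of_mem hq
      have h1 : q.1 * s q ≤ nps s :=
        Finset.single_le_sum (f := fun r => r.1 * s r) (fun _ _ => Nat.zero_le _) hq
      have h2 : q.2 * s q ≤ nts s :=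
        Finset.single_le_sum (f := fun r => r.2 * s r) (fun _ _ => Nat.zero_le _) hq
      have hsn := supp_ne_of_Bmem hs hq
      have h2' : q.2 = 0 := by nlinarith
      have h1' : 1 ≤ q.1 := by
        rcases hsn with h | h
        · exact h
        · omega
      have h1'' : q.1 = 1 := by nlinarith
      exact eq_pair_of h1'' h2'
    have hsupp : s.support ⊆ {((1 : ℕ), (0 : ℕ))} := by
      intro q hq
      rw [Finset.mem_singleton]
      exact key q hq
    have hss : s = Finsupp.single (1, 0) (s (1, 0)) :=
      Finsupp.support_subset_singleton.mp hsupp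
    have hval : nps s = s (1, 0) := by
      conv_lhs => rw [hss, nps]
      rw [Finsupp.sum_single_index (by simp)]
      simp
    rw [hss, hval.symm.trans hnps]
  · rintro rfl
    refine ⟨?_, ?_, ?_, ?_⟩
    · rw [Finsupp.single_eq_of_ne (by decide)]
    · rw [Finsupp.single_eq_of_ne (by decide)]
    · show nps (Finsupp.single ((1 : ℕ), (0 : ℕ)) 1) = 1
      rw [nps, Finsupp.sum_single_index (by simp)]
      rfl
    · show nts (Finsupp.single ((1 : ℕ), (0 : ℕ)) 1) + 1
        = msum (Finsupp.single ((1 : ℕ), (0 : ℕ)) 1)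
      rw [nts, msum, Finsupp.sum_single_index (by simp), Finsupp.sum_single_index rfl]
      rfl

lemma termJ_single (u : ℕ × ℕ → ℝ) :
    termJ u (Finsupp.single ((1 : ℕ), (0 : ℕ)) 1) = -(u (1, 0)) / u (0, 1) := by
  have hm : msum (Finsupp.single ((1 : ℕ), (0 : ℕ)) 1) = 1 := by
    rw [msum, Finsupp.sum_single_index rfl]
  have hn : nps (Finsupp.single ((1 : ℕ), (0 : ℕ)) 1) = 1 := by
    rw [nps, Finsupp.sum_single_index (by simp)]
    rfl
  have ht : nts (Finsupp.single ((1 : ℕ), (0 : ℕ)) 1) = 0 := by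
    rw [nts, Finsupp.sum_single_index (by simp)]
    rfl
  have hD : Dfac (Finsupp.single ((1 : ℕ), (0 : ℕ)) 1) = 1 := by
    rw [Dfac, Finsupp.prod_single_index
      (h := fun (q : ℕ × ℕ) (c : ℕ) => ((q.1.factorial : ℝ)) ^ c * ((q.2.factorial : ℝ)) ^ c
        * ((c.factorial : ℝ))) (by simp)]
    norm_num [Nat.factorial]
  have hP : Pp u (Finsupp.single ((1 : ℕ), (0 : ℕ)) 1) = u (1, 0) := by
    rw [Pp, Finsupp.prod_single_index (h := fun (q : ℕ × ℕ) (c : ℕ) => u q ^ c)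
      (pow_zero _), pow_one]
  rw [termJ, coJ, hm, hn, ht, hD, hP]
  norm_num [Nat.factorial]

/-- Main induction: Johnson's formula at every point of a good open set. -/
lemma main_induction
    {U : Set (ℝ × ℝ)} (hU : IsOpen U) {f : ℝ → ℝ → ℝ} (hGU : Smo U f)
    {V : Set ℝ} (hV : IsOpen V) {y : ℝ → ℝ}
    (hyV : ∀ x ∈ V, ContDiffAt ℝ (⊤ : ℕ∞) y x)
    (hcurve : ∀ x ∈ V, (x, y x) ∈ U)
    (hzero : ∀ x ∈ V, f x (y x) = 0)
    (hne : ∀ x ∈ V, pd f 0 1 x (y x) ≠ 0) :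
    ∀ n, 1 ≤ n → ∀ x ∈ V, iteratedDeriv n y x
      = ∑ s ∈ Bfin n, termJ (fun q => pd f q.1 q.2 x (y x)) s := by
  have hyd : ∀ x ∈ V, HasDerivAt y (deriv y x) x := fun x hx =>
    ((hyV x hx).differentiableAt (by simp)).hasDerivAt
  have hy'eq : ∀ x ∈ V, deriv y x = -(pd f 1 0 x (y x)) / pd f 0 1 x (y x) := by
    intro x hx
    have h1 : HasDerivAt (fun x' => pd f 0 0 x' (y x'))
        (pd f (0 + 1) 0 x (y x) + pd f 0 (0 + 1) x (y x) * deriv y x) x :=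
      hasDerivAt_pd_comp hU hGU (hcurve x hx) (hyd x hx) 0 0
    rw [pd_zero_zero] at h1
    have h2 : (fun x' => f x' (y x')) =ᶠ[𝓝 x] fun _ => (0 : ℝ) := by
      filter_upwards [hV.mem_nhds hx] with x' hx'
      exact hzero x' hx'
    have h3 : pd f (0 + 1) 0 x (y x) + pd f 0 (0 + 1) x (y x) * deriv y x = 0 := by
      rw [← h1.deriv, h2.deriv_eq]
      exact deriv_const x 0
    have h4 := hne x hx
    show deriv y x = -(pd f (0 + 1) 0 x (y x)) / pd f 0 (0 + 1) x (y x)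
    field_simp
    linarith [h3]
  intro n
  induction n with
  | zero => omega
  | succ n ih =>
    intro _ x hx
    by_cases hn1 : n = 0
    · subst hn1
      rw [show (0 + 1 : ℕ) = 1 from rfl, iteratedDeriv_one, Bfin_one, Finset.sum_singleton,
        termJ_single]
      exact hy'eq x hx
    · have hn : 1 ≤ n := by omega
      rw [iteratedDeriv_succ]
      have hev : iteratedDeriv n y =ᶠ[𝓝 x]
          fun x' => ∑ s ∈ Bfin n, termJ (fun q => pd f q.1 q.2 x' (y x')) s := by
        filter_upwards [hV.mem_nhds hx] with x' hx'
        exact ih hn x' hx'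
      rw [hev.deriv_eq]
      have hD : HasDerivAt
          (fun x' => ∑ s ∈ Bfin n, termJ (fun q => pd f q.1 q.2 x' (y x')) s)
          (∑ s ∈ Bfin n,
            (∑ q ∈ s.support,
              (coJ s * ((s q : ℕ) : ℝ)
                  * Pp (fun r => pd f r.1 r.2 x (y x)) (ssub s q)
                  * (fun r : ℕ × ℕ => pd f r.1 r.2 x (y x)) (q.1 + 1, q.2)
                  / ((fun r : ℕ × ℕ => pd f r.1 r.2 x (y x)) (0, 1)) ^ msum s
                + -(coJ s * ((s q : ℕ) : ℝ)
                    * Pp (fun r => pd f r.1 r.2 x (y x)) (ssub s q)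
                    * (fun r : ℕ × ℕ => pd f r.1 r.2 x (y x)) (q.1, q.2 + 1)
                    * (fun r : ℕ × ℕ => pd f r.1 r.2 x (y x)) (1, 0))
                    / ((fun r : ℕ × ℕ => pd f r.1 r.2 x (y x)) (0, 1)) ^ (msum s + 1))
            + -(coJ s * ((msum s : ℕ) : ℝ) * Pp (fun r => pd f r.1 r.2 x (y x)) s
                  * (fun r : ℕ × ℕ => pd f r.1 r.2 x (y x)) (1, 1))
                / ((fun r : ℕ × ℕ => pd f r.1 r.2 x (y x)) (0, 1)) ^ (msum s + 1)
            + coJ s * ((msum s : ℕ) : ℝ) * Pp (fun r => pd f r.1 r.2 x (y x)) s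
                  * (fun r : ℕ × ℕ => pd f r.1 r.2 x (y x)) (0, 2)
                  * (fun r : ℕ × ℕ => pd f r.1 r.2 x (y x)) (1, 0)
                / ((fun r : ℕ × ℕ => pd f r.1 r.2 x (y x)) (0, 1)) ^ (msum s + 2))) x := by
        refine HasDerivAt.fun_sum fun s hs => ?_
        exact hasDerivAt_termJ hU hGU (hyd x hx) (hcurve x hx) (hne x hx) (hy'eq x hx) s
          (one_le_msum_of_Bmem (mem_Bfin.mp hs))
      rw [hD.deriv]
      exact step_identity (fun r : ℕ × ℕ => pd f r.1 r.2 x (y x)) (hne x hx) n hn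

end JohnsonAux

theorem statement18 (f : ℝ → ℝ → ℝ) (x₀ y₀ : ℝ) (y : ℝ → ℝ)
    (hf : ∀ᶠ p in 𝓝 (x₀, y₀), ContDiffAt ℝ (⊤ : ℕ∞) (Function.uncurry f) p)
    (hf0 : f x₀ y₀ = 0) (hfy : pd f 0 1 x₀ y₀ ≠ 0)
    (hy : ∀ᶠ x in 𝓝 x₀, ContDiffAt ℝ (⊤ : ℕ∞) y x)
    (hy0 : y x₀ = y₀)
    (himp : ∀ᶠ x in 𝓝 x₀, f x (y x) = 0)
    (n : ℕ) (hn : 2 ≤ n) :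
    iteratedDeriv n y x₀ =
      ∑ᶠ s ∈ {s : (ℕ × ℕ) →₀ ℕ | Bmem n s},
        ((-1 : ℝ) ^ (s.sum fun _ c => c) *
            ((s.sum fun p c => p.1 * c).factorial : ℝ) *
            ((s.sum fun p c => p.2 * c).factorial : ℝ) /
          (s.prod fun p c =>
            (p.1.factorial : ℝ) ^ c * (p.2.factorial : ℝ) ^ c * (c.factorial : ℝ))) *
        (s.prod fun p c => (pd f p.1 p.2 x₀ y₀) ^ c) /
        (pd f 0 1 x₀ y₀) ^ (s.sum fun _ c => c) := by
  classical
  open JohnsonAux in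
  obtain ⟨U, hU1, hU2, hU3⟩ := eventually_nhds_iff.mp hf
  obtain ⟨V₀, hV01, hV02, hV03⟩ := eventually_nhds_iff.mp hy
  obtain ⟨W₀, hW01, hW02, hW03⟩ := eventually_nhds_iff.mp himp
  set V : Set ℝ := {x | x ∈ V₀ ∧ x ∈ W₀ ∧ (x, y x) ∈ U ∧ pd f 0 1 x (y x) ≠ 0} with hVdef
  have hVopen : IsOpen V := by
    rw [isOpen_iff_mem_nhds]
    intro x hx
    obtain ⟨hx1, hx2, hx3, hx4⟩ := hx
    have hcy : ContinuousAt y x := (hV01 x hx1).continuousAt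
    have hcurve : ContinuousAt (fun x' => (x', y x')) x := continuousAt_id.prodMk hcy
    have hyd : HasDerivAt y (deriv y x) x :=
      ((hV01 x hx1).differentiableAt (by simp)).hasDerivAt
    have hpd : ContinuousAt (fun x' => pd f 0 1 x' (y x')) x := by
      have := hasDerivAt_pd_comp hU2 (fun q hq => hU1 q hq) hx3 hyd 0 1
      exact this.continuousAt
    have h1 : ∀ᶠ x' in 𝓝 x, x' ∈ V₀ := hV02.mem_nhds hx1
    have h2 : ∀ᶠ x' in 𝓝 x, x' ∈ W₀ := hW02.mem_nhds hx2
    have h3 : ∀ᶠ x' in 𝓝 x, (x', y x') ∈ U := hcurve.preimage_mem_nhds (hU2.mem_nhds hx3)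
    have h4 : ∀ᶠ x' in 𝓝 x, pd f 0 1 x' (y x') ≠ 0 := hpd.eventually_ne hx4
    filter_upwards [h1, h2, h3, h4] with x' ha hb hc hd
    exact ⟨ha, hb, hc, hd⟩
  have hx₀V : x₀ ∈ V := by
    refine ⟨hV03, hW03, ?_, ?_⟩
    · rw [hy0]; exact hU3
    · rw [hy0]; exact hfy
  have key := main_induction hU2 (fun q hq => hU1 q hq) hVopen
    (fun x hx => hV01 x hx.1) (fun x hx => hx.2.2.1)
    (fun x hx => hW01 x hx.2.1) (fun x hx => hx.2.2.2)
    n (by omega) x₀ hx₀V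
  rw [key, setOf_Bmem_eq n, finsum_mem_coe_finset]
  refine Finset.sum_congr rfl fun s _ => ?_
  rw [hy0]
  rfl
end
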